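/- arXiv:0811.2312 — 3 statements merged into one kernel-verified Lean document; each statement's English description precedes it below -/
import Mathlib

section
/- Suppose Alice prepares a qudit in a basis state of one of two mutually unbiased bases of ℂ^d, choosing each of the d basis states of either basis with equal prior probability 1/d, and Bob measures with an arbitrary POVM, without knowing which basis was used. Then the sum of the mutual information about the messages sent via the two bases satisfies I_1 + I_2 ≤ log₂ d. -/
/-!
With `T_s = tr E_s`, each mutual information equals `log₂ d - ∑ₛ (T_s / d) H(p_s)`, where `p_s`
is the distribution of the outcomes of measuring the state `E_s / T_s` in the corresponding
basis. As `∑ₛ T_s = tr I = d`, the theorem follows from the Maassen–Uffink uncertainty relation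
`H(p₁) + H(p₂) ≥ log d` for every state. Decomposing `E_s` into rank-one terms and using the
concavity of entropy reduces it to pure states `c`. There the overlap matrix `V` of the two bases
is unitary with entries of modulus `d^(-1/2)`, so Riesz–Thorin interpolation (Hadamard's three
lines theorem) gives the Hausdorff–Young bound `‖Vc‖_q ≤ d^(1/q - 1/2) ‖c‖_p` for
`p = 2/(1+θ)`, `q = 2/(1-θ)`. In Rényi form this is `H_α(|c|²) + H_β(|Vc|²) ≥ log d` with
`α = 1/(1+θ)` and `β = 1/(1-θ)`; since `H_β ≤ H` for `β > 1` and `H_α → H` as `α → 1`, letting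
`θ → 0` gives the Shannon bound.
-/

open scoped BigOperators ComplexOrder
open Matrix

noncomputable section

/-- Shannon entropy (in bits) of a finitely-indexed probability vector. -/
def shannonEntropy {ι : Type*} [Fintype ι] (q : ι → ℝ) : ℝ :=
  -∑ i, q i * Real.logb 2 (q i)

/-- Born probability ⟨v|M|v⟩ of POVM element `M` on the (unit vector) state `v`. -/
def outProb {d : ℕ} (M : Matrix (Fin d) (Fin d) ℂ) (v : Fin d → ℂ) : ℝ :=
  (star v ⬝ᵥ M.mulVec v).re

/-- A finite family of matrices is a POVM if each member is positive semidefinite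
and they sum to the identity. -/
def IsPOVM {d : ℕ} {S : Type*} [Fintype S] (E : S → Matrix (Fin d) (Fin d) ℂ) : Prop :=
  (∀ s, (E s).PosSemidef) ∧ ∑ s, E s = 1

/-- `B` lists the vectors of an orthonormal basis of ℂ^d. -/
def IsONB {d : ℕ} (B : Fin d → Fin d → ℂ) : Prop :=
  ∀ i j, star (B i) ⬝ᵥ B j = if i = j then 1 else 0

/-- Two bases of ℂ^d are mutually unbiased: all squared overlaps equal 1/d. -/
def AreMUB {d : ℕ} (B C : Fin d → Fin d → ℂ) : Prop :=
  ∀ i j, ‖star (B i) ⬝ᵥ C j‖ ^ 2 = 1 / d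

/-- Mutual information (in bits) between Alice's input `i` (prior `p i`, state `B i`)
and Bob's POVM outcome `s`:  `I = H({p i}) - ∑ s p(s) H({p_{i|s}})`. -/
def mutInfo {d : ℕ} {S : Type*} [Fintype S] (B : Fin d → Fin d → ℂ) (p : Fin d → ℝ)
    (E : S → Matrix (Fin d) (Fin d) ℂ) : ℝ :=
  shannonEntropy p -
    ∑ s, (∑ i, p i * outProb (E s) (B i)) *
      shannonEntropy (fun i =>
        p i * outProb (E s) (B i) / ∑ j, p j * outProb (E s) (B j))

open Real Filter Topology

section Entropy

variable {ι : Type*} [Fintype ι]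

def entropy (q : ι → ℝ) : ℝ := ∑ i, negMulLog (q i)

def renyiEntropy (α : ℝ) (q : ι → ℝ) : ℝ := log (∑ i, q i ^ α) / (1 - α)

theorem shannonEntropy_eq_entropy_div (q : ι → ℝ) : shannonEntropy q = entropy q / log 2 := by
  simp only [shannonEntropy, entropy, negMulLog, logb, Finset.sum_div, ← Finset.sum_neg_distrib]
  exact Finset.sum_congr rfl fun i _ => by ring

theorem shannonEntropy_uniform (d : ℕ) :
    shannonEntropy (fun _ : Fin d => 1 / (d : ℝ)) = logb 2 d := by
  rcases Nat.eq_zero_or_pos d with rfl | hd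
  · simp [shannonEntropy]
  · simp only [shannonEntropy, one_div, logb_inv, mul_neg, Finset.sum_neg_distrib,
      Finset.sum_const, Finset.card_univ, Fintype.card_fin, nsmul_eq_mul, neg_neg]
    field_simp

theorem sum_rpow_pos_of_sum_eq_one {q : ι → ℝ} (hq0 : ∀ i, 0 ≤ q i) (hq1 : ∑ i, q i = 1)
    (α : ℝ) : 0 < ∑ i, q i ^ α := by
  obtain ⟨i, -, hi⟩ := Finset.exists_ne_zero_of_sum_ne_zero (hq1.trans_ne one_ne_zero)
  exact (rpow_pos_of_pos ((hq0 i).lt_of_ne' hi) α).trans_le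
    (Finset.single_le_sum (fun j _ => rpow_nonneg (hq0 j) α) (Finset.mem_univ i))

theorem one_sub_mul_entropy_le_log_sum_rpow {q : ι → ℝ} (hq0 : ∀ i, 0 ≤ q i)
    (hq1 : ∑ i, q i = 1) {β : ℝ} (hβ : β ≠ 0) : (1 - β) * entropy q ≤ log (∑ i, q i ^ β) := by
  have hterm : ∀ i, q i * exp ((β - 1) * log (q i)) = q i ^ β := by
    intro i
    rcases (hq0 i).eq_or_lt with h | h
    · rw [← h, zero_mul, zero_rpow hβ]
    · rw [mul_comm (β - 1), ← rpow_def_of_pos h, mul_comm, ← rpow_add_one h.ne', sub_add_cancel]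
  have jensen := convexOn_exp.map_sum_le (t := Finset.univ) (w := q)
    (p := fun i => (β - 1) * log (q i)) (fun i _ => hq0 i) hq1 (fun _ _ => Set.mem_univ _)
  simp only [smul_eq_mul, hterm] at jensen
  have hsum : ∑ i, q i * ((β - 1) * log (q i)) = (1 - β) * entropy q := by
    simp only [entropy, negMulLog, Finset.mul_sum]
    exact Finset.sum_congr rfl fun i _ => by ring
  rw [hsum] at jensen
  exact (le_log_iff_exp_le ((exp_pos _).trans_le jensen)).mpr jensen

theorem renyiEntropy_le_entropy {q : ι → ℝ} (hq0 : ∀ i, 0 ≤ q i) (hq1 : ∑ i, q i = 1) {β : ℝ}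
    (hβ : 1 < β) : renyiEntropy β q ≤ entropy q := by
  have h := one_sub_mul_entropy_le_log_sum_rpow hq0 hq1 (by positivity : β ≠ 0)
  exact (div_le_iff_of_neg' (by linarith)).mpr h

theorem hasDerivAt_log_sum_rpow {q : ι → ℝ} (hq0 : ∀ i, 0 ≤ q i) (hq1 : ∑ i, q i = 1) :
    HasDerivAt (fun α : ℝ => log (∑ i, q i ^ α)) (-entropy q) 1 := by
  have hsum : HasDerivAt (fun α : ℝ => ∑ i, q i ^ α) (∑ i, q i * log (q i)) 1 := by
    refine HasDerivAt.fun_sum fun i _ => ?_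
    rcases (hq0 i).eq_or_lt with h | h
    · rw [← h, zero_mul]
      refine (hasDerivAt_const (1 : ℝ) (0 : ℝ)).congr_of_eventuallyEq ?_
      filter_upwards [eventually_ne_nhds one_ne_zero] with α hα
      exact zero_rpow hα
    · simpa using (hasStrictDerivAt_const_rpow h 1).hasDerivAt
  have h1 : ∑ i, q i ^ (1 : ℝ) = 1 := by simpa using hq1
  convert hsum.log (by rw [h1]; exact one_ne_zero) using 1
  simp [hq1, entropy, negMulLog]

theorem tendsto_renyiEntropy {q : ι → ℝ} (hq0 : ∀ i, 0 ≤ q i) (hq1 : ∑ i, q i = 1) :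
    Tendsto (fun α => renyiEntropy α q) (𝓝[≠] 1) (𝓝 (entropy q)) := by
  have h1 : log (∑ i, q i ^ (1 : ℝ)) = 0 := by simp [hq1]
  have hslope := (hasDerivAt_iff_tendsto_slope.mp (hasDerivAt_log_sum_rpow hq0 hq1)).neg
  rw [neg_neg] at hslope
  refine hslope.congr fun α => ?_
  rw [slope_def_field, h1, renyiEntropy, show 1 - α = -(α - 1) by ring, sub_zero, div_neg]

theorem sum_mul_entropy_le_entropy_sum {κ : Type*} [Fintype κ] (f : κ → ι → ℝ) (N : κ → ℝ)
    (hf : ∀ k i, 0 ≤ f k i) (hN : ∀ k, ∑ i, f k i = N k) (hT : 0 < ∑ k, N k) :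
    ∑ k, N k / (∑ l, N l) * entropy (fun i => f k i / N k) ≤
      entropy (fun i => (∑ k, f k i) / ∑ l, N l) := by
  set T := ∑ l, N l
  have hN0 : ∀ k, 0 ≤ N k := fun k => hN k ▸ Finset.sum_nonneg fun i _ => hf k i
  have hmix : ∀ i, ∑ k, N k / T * (f k i / N k) = (∑ k, f k i) / T := by
    intro i
    rw [Finset.sum_div]
    refine Finset.sum_congr rfl fun k _ => ?_
    rcases (hN0 k).eq_or_lt with h | h
    · have : f k i = 0 := by
        have := Finset.single_le_sum (fun j _ => hf k j) (Finset.mem_univ i)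
        linarith [hN k, hf k i]
      simp [this]
    · field_simp
  simp only [entropy, Finset.mul_sum]
  rw [Finset.sum_comm]
  refine Finset.sum_le_sum fun i _ => ?_
  rw [← hmix]
  have := concaveOn_negMulLog.le_map_sum (t := Finset.univ) (w := fun k => N k / T)
    (p := fun k => f k i / N k) (fun k _ => div_nonneg (hN0 k) hT.le)
    (by rw [← Finset.sum_div, div_self hT.ne']) (fun k _ => div_nonneg (hf k i) (hN0 k))
  simpa only [smul_eq_mul] using this

end Entropy

section Interpolation

open Complex HadamardThreeLines

/-- `sign x * |x| ^ s`, holomorphic in `s`: the family along which Riesz–Thorin interpolates. -/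
def phaseCpow (s x : ℂ) : ℂ := if x = 0 then 0 else (‖x‖ : ℂ) ^ (s - 1) * x

theorem phaseCpow_one (x : ℂ) : phaseCpow 1 x = x := by
  unfold phaseCpow
  split_ifs with h <;> simp [h]

theorem norm_phaseCpow {s : ℂ} (hs : 0 < s.re) (x : ℂ) : ‖phaseCpow s x‖ = ‖x‖ ^ s.re := by
  unfold phaseCpow
  split_ifs with h
  · simp [h, Real.zero_rpow hs.ne']
  · have hx : 0 < ‖x‖ := norm_pos_iff.mpr h
    rw [norm_mul, norm_cpow_eq_rpow_re_of_pos hx, sub_re, one_re, Real.rpow_sub_one hx.ne',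
      div_mul_cancel₀ _ hx.ne']

theorem differentiable_phaseCpow (x : ℂ) : Differentiable ℂ (phaseCpow · x) := by
  unfold phaseCpow
  split_ifs with h
  · exact differentiable_const 0
  · exact ((differentiable_id.sub_const 1).const_cpow
      (Or.inl (ofReal_ne_zero.mpr (norm_ne_zero_iff.mpr h)))).mul_const x

theorem norm_phaseCpow_le {s : ℂ} {b : ℝ} (hs : 0 < s.re) (hsb : s.re ≤ b) (x : ℂ) :
    ‖phaseCpow s x‖ ≤ 1 + ‖x‖ ^ b := by
  rw [norm_phaseCpow hs]
  rcases le_total ‖x‖ 1 with h | h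
  · linarith [rpow_le_one (norm_nonneg x) h hs.le, rpow_nonneg (norm_nonneg x) b]
  · linarith [rpow_le_rpow_of_exponent_le h hsb]

variable {ι κ : Type*} [Fintype ι] [Fintype κ]

theorem norm_dotProduct_mulVec_le_of_sum_sq {V : Matrix κ ι ℂ}
    (hV : ∀ x, ∑ j, ‖(V *ᵥ x) j‖ ^ 2 ≤ ∑ i, ‖x i‖ ^ 2) (w : κ → ℂ) (c : ι → ℂ) :
    ‖w ⬝ᵥ V *ᵥ c‖ ≤ √((∑ j, ‖w j‖ ^ 2) * ∑ i, ‖c i‖ ^ 2) :=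
  calc ‖w ⬝ᵥ V *ᵥ c‖ ≤ ∑ j, ‖w j‖ * ‖(V *ᵥ c) j‖ := by
        simp only [dotProduct, ← norm_mul]
        exact norm_sum_le _ _
    _ ≤ √(∑ j, ‖w j‖ ^ 2) * √(∑ j, ‖(V *ᵥ c) j‖ ^ 2) := Real.sum_mul_le_sqrt_mul_sqrt _ _ _
    _ ≤ √(∑ j, ‖w j‖ ^ 2) * √(∑ i, ‖c i‖ ^ 2) := by gcongr; exact hV c
    _ = _ := (Real.sqrt_mul (by positivity) _).symm

theorem norm_dotProduct_mulVec_le_of_norm_entry {V : Matrix κ ι ℂ} {M : ℝ}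
    (hV : ∀ j i, ‖V j i‖ ≤ M) (w : κ → ℂ) (c : ι → ℂ) :
    ‖w ⬝ᵥ V *ᵥ c‖ ≤ M * (∑ i, ‖c i‖) * ∑ j, ‖w j‖ :=
  calc ‖w ⬝ᵥ V *ᵥ c‖ ≤ ∑ j, ∑ i, ‖w j‖ * (‖V j i‖ * ‖c i‖) := by
        simp only [dotProduct, mulVec, Finset.mul_sum, ← norm_mul]
        exact (norm_sum_le _ _).trans (Finset.sum_le_sum fun j _ => norm_sum_le _ _)
    _ ≤ ∑ j, ∑ i, ‖w j‖ * (M * ‖c i‖) := by gcongr with j _ i _; exact hV j i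
    _ = M * (∑ i, ‖c i‖) * ∑ j, ‖w j‖ := by
        simp only [← Finset.mul_sum, ← Finset.sum_mul]
        ring

theorem norm_dotProduct_mulVec_le_interp {V : Matrix κ ι ℂ} {M : ℝ}
    (hV2 : ∀ x, ∑ j, ‖(V *ᵥ x) j‖ ^ 2 ≤ ∑ i, ‖x i‖ ^ 2) (hV : ∀ j i, ‖V j i‖ ≤ M) (hM : 0 ≤ M)
    {θ : ℝ} (hθ0 : 0 ≤ θ) (hθ1 : θ ≤ 1) (w : κ → ℂ) (c : ι → ℂ) :
    ‖w ⬝ᵥ V *ᵥ c‖ ≤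
      √((∑ j, ‖w j‖ ^ (2 / (1 + θ))) * ∑ i, ‖c i‖ ^ (2 / (1 + θ))) ^ (1 - θ) *
        (M * (∑ i, ‖c i‖ ^ (2 / (1 + θ))) * ∑ j, ‖w j‖ ^ (2 / (1 + θ))) ^ θ := by
  set p := 2 / (1 + θ) with hp
  have hp0 : 0 < p := by positivity
  -- The exponent is `p / 2` on `re z = 0`, where the `ℓ²` bound applies, `p` on `re z = 1`,
  -- where the entrywise bound applies, and `1` at `z = θ`.
  set s : ℂ → ℂ := fun z => (p / 2 : ℝ) * (1 + z)
  have hs_re : ∀ z, (s z).re = p / 2 * (1 + z.re) := fun z => by simp [s]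
  have hs_pos : ∀ z : ℂ, 0 ≤ z.re → 0 < (s z).re := fun z hz => by rw [hs_re]; positivity
  set F : ℂ → ℂ := fun z => (fun j => phaseCpow (s z) (w j)) ⬝ᵥ V *ᵥ fun i => phaseCpow (s z) (c i)
  have hFθ : F θ = w ⬝ᵥ V *ᵥ c := by
    have : s θ = 1 := by
      simp only [s, hp]
      push_cast
      field_simp
    simp [F, this, phaseCpow_one]
  have hdiff : Differentiable ℂ F := by
    have h : ∀ x, Differentiable ℂ fun z => phaseCpow (s z) x :=
      fun x => (differentiable_phaseCpow x).comp (by fun_prop)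
    simp only [F, dotProduct, mulVec]
    fun_prop
  have hbdd : BddAbove ((norm ∘ F) '' verticalClosedStrip 0 1) := by
    refine ⟨M * (∑ i, (1 + ‖c i‖ ^ p)) * ∑ j, (1 + ‖w j‖ ^ p), ?_⟩
    rintro _ ⟨z, ⟨hz0, hz1⟩, rfl⟩
    have hle : ∀ x, ‖phaseCpow (s z) x‖ ≤ 1 + ‖x‖ ^ p :=
      norm_phaseCpow_le (hs_pos z hz0) (by rw [hs_re]; nlinarith)
    refine (norm_dotProduct_mulVec_le_of_norm_entry hV _ _).trans ?_
    gcongr with i _ j _ <;> exact hle _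
  have hedge0 : ∀ z ∈ re ⁻¹' {0}, ‖F z‖ ≤
      √((∑ j, ‖w j‖ ^ p) * ∑ i, ‖c i‖ ^ p) := by
    intro z (hz : z.re = 0)
    have hsq : ∀ x, ‖phaseCpow (s z) x‖ ^ 2 = ‖x‖ ^ p := fun x => by
      rw [norm_phaseCpow (hs_pos z hz.ge), hs_re, hz, ← Real.rpow_mul_natCast (norm_nonneg _)]
      norm_num
    simpa only [hsq] using norm_dotProduct_mulVec_le_of_sum_sq hV2
      (fun j => phaseCpow (s z) (w j)) (fun i => phaseCpow (s z) (c i))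
  have hedge1 : ∀ z ∈ re ⁻¹' {1}, ‖F z‖ ≤ M * (∑ i, ‖c i‖ ^ p) * ∑ j, ‖w j‖ ^ p := by
    intro z (hz : z.re = 1)
    have h : ∀ x, ‖phaseCpow (s z) x‖ = ‖x‖ ^ p := fun x => by
      rw [norm_phaseCpow (hs_pos z (by rw [hz]; exact zero_le_one)), hs_re, hz]
      ring_nf
    simpa only [h] using norm_dotProduct_mulVec_le_of_norm_entry hV
      (fun j => phaseCpow (s z) (w j)) (fun i => phaseCpow (s z) (c i))
  have hθ : (θ : ℂ) ∈ verticalClosedStrip 0 1 := by simpa [verticalClosedStrip] using ⟨hθ0, hθ1⟩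
  simpa [hFθ] using norm_le_interp_of_mem_verticalClosedStrip' zero_lt_one hθ hdiff.diffContOnCl
    hbdd hedge0 hedge1

end Interpolation

section EntropicUncertainty

variable {ι κ : Type*} [Fintype ι] [Fintype κ]

theorem hausdorffYoung_log {V : Matrix κ ι ℂ} {M : ℝ}
    (hV2 : ∀ x, ∑ j, ‖(V *ᵥ x) j‖ ^ 2 ≤ ∑ i, ‖x i‖ ^ 2) (hV : ∀ j i, ‖V j i‖ ≤ M) (hM : 0 < M)
    {θ : ℝ} (hθ0 : 0 < θ) (hθ1 : θ < 1) (c : ι → ℂ)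
    (hc : 0 < ∑ i, ‖c i‖ ^ (2 / (1 + θ))) (hVc : 0 < ∑ j, ‖(V *ᵥ c) j‖ ^ (2 / (1 - θ))) :
    (1 - θ) / 2 * log (∑ j, ‖(V *ᵥ c) j‖ ^ (2 / (1 - θ))) ≤
      (1 + θ) / 2 * log (∑ i, ‖c i‖ ^ (2 / (1 + θ))) + θ * log M := by
  set p := 2 / (1 + θ)
  set q := 2 / (1 - θ)
  set v := V *ᵥ c
  set A := ∑ i, ‖c i‖ ^ p
  set B := ∑ j, ‖v j‖ ^ q
  have hq : 2 < q := by rw [lt_div_iff₀ (by linarith)]; linarith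
  -- `w` is dual to `v`: `w ⬝ᵥ v = ∑ |v j| ^ q = ∑ |w j| ^ p`.
  set w : κ → ℂ := fun j => (‖v j‖ ^ (q - 2) : ℝ) * star (v j)
  have hwv : w ⬝ᵥ v = B := by
    simp only [dotProduct, w, B, Complex.ofReal_sum]
    refine Finset.sum_congr rfl fun j _ => ?_
    rw [mul_assoc, Complex.star_def, Complex.conj_mul', ← Complex.ofReal_pow, ← Complex.ofReal_mul,
      ← rpow_add_natCast' (norm_nonneg _) (by push_cast; linarith)]
    push_cast
    ring_nf
  have hw : ∑ j, ‖w j‖ ^ p = B := by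
    refine Finset.sum_congr rfl fun j _ => ?_
    rw [norm_mul, Complex.norm_real, norm_star, Real.norm_of_nonneg (rpow_nonneg (norm_nonneg _) _),
      ← rpow_add_one' (norm_nonneg _) (by linarith), ← rpow_mul (norm_nonneg _)]
    congr 1
    have : 1 - θ ≠ 0 := by linarith
    simp only [p, q]
    field_simp
    ring
  have h := norm_dotProduct_mulVec_le_interp hV2 hV hM.le hθ0.le hθ1.le w c
  rw [hwv, hw, Complex.norm_real, Real.norm_of_nonneg hVc.le] at h
  have hlog := log_le_log hVc h
  rw [log_mul (by positivity) (by positivity), log_rpow (by positivity), log_rpow (by positivity),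
    log_sqrt (by positivity), log_mul hVc.ne' hc.ne', log_mul (by positivity) hVc.ne',
    log_mul hM.ne' hc.ne'] at hlog
  linear_combination hlog

theorem neg_two_mul_log_le_renyiEntropy_add {V : Matrix κ ι ℂ} {M : ℝ}
    (hV : ∀ x, ∑ j, ‖(V *ᵥ x) j‖ ^ 2 = ∑ i, ‖x i‖ ^ 2) (hVM : ∀ j i, ‖V j i‖ ≤ M) (hM : 0 < M)
    {θ : ℝ} (hθ0 : 0 < θ) (hθ1 : θ < 1) (c : ι → ℂ) (hc : ∑ i, ‖c i‖ ^ 2 = 1) :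
    -(2 * log M) ≤ renyiEntropy (1 / (1 + θ)) (fun i => ‖c i‖ ^ 2) +
      renyiEntropy (1 / (1 - θ)) (fun j => ‖(V *ᵥ c) j‖ ^ 2) := by
  have hpow : ∀ (x : ℂ) (r : ℝ), ‖x‖ ^ (2 / r) = (‖x‖ ^ 2) ^ (1 / r) := fun x r => by
    rw [← rpow_natCast, ← rpow_mul (norm_nonneg _)]
    ring_nf
  have hA := sum_rpow_pos_of_sum_eq_one (fun i => sq_nonneg ‖c i‖) hc (1 / (1 + θ))
  have hB := sum_rpow_pos_of_sum_eq_one (fun j => sq_nonneg ‖(V *ᵥ c) j‖) ((hV c).trans hc)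
    (1 / (1 - θ))
  simp only [← hpow] at hA hB
  have hHY := hausdorffYoung_log (fun x => (hV x).le) hVM hM hθ0 hθ1 c hA hB
  have h1 : 1 - θ ≠ 0 := by linarith
  have h2 : 1 + θ ≠ 0 := by linarith
  have h0 : θ ≠ 0 := hθ0.ne'
  have hsum : renyiEntropy (1 / (1 + θ)) (fun i => ‖c i‖ ^ 2) +
      renyiEntropy (1 / (1 - θ)) (fun j => ‖(V *ᵥ c) j‖ ^ 2) =
      ((1 + θ) * log (∑ i, ‖c i‖ ^ (2 / (1 + θ))) -
        (1 - θ) * log (∑ j, ‖(V *ᵥ c) j‖ ^ (2 / (1 - θ)))) / θ := by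
    have e1 : 1 - 1 / (1 + θ) = θ / (1 + θ) := by field_simp; ring
    have e2 : 1 - 1 / (1 - θ) = -θ / (1 - θ) := by field_simp; ring
    simp only [renyiEntropy, ← hpow, e1, e2]
    generalize log (∑ i, ‖c i‖ ^ (2 / (1 + θ))) = a
    generalize log (∑ j, ‖(V *ᵥ c) j‖ ^ (2 / (1 - θ))) = b
    field_simp
    ring
  rw [hsum, le_div_iff₀ hθ0]
  linarith

theorem neg_two_mul_log_le_entropy_add_of_sum_sq_eq_one {V : Matrix κ ι ℂ} {M : ℝ}
    (hV : ∀ x, ∑ j, ‖(V *ᵥ x) j‖ ^ 2 = ∑ i, ‖x i‖ ^ 2) (hVM : ∀ j i, ‖V j i‖ ≤ M) (hM : 0 < M)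
    (c : ι → ℂ) (hc : ∑ i, ‖c i‖ ^ 2 = 1) :
    -(2 * log M) ≤ entropy (fun i => ‖c i‖ ^ 2) + entropy (fun j => ‖(V *ᵥ c) j‖ ^ 2) := by
  have hVc : ∑ j, ‖(V *ᵥ c) j‖ ^ 2 = 1 := (hV c).trans hc
  have hbound : ∀ θ ∈ Set.Ioo (0 : ℝ) 1, -(2 * log M) - entropy (fun j => ‖(V *ᵥ c) j‖ ^ 2) ≤
      renyiEntropy (1 / (1 + θ)) (fun i => ‖c i‖ ^ 2) := by
    rintro θ ⟨hθ0, hθ1⟩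
    have hβ : 1 < 1 / (1 - θ) := by rw [lt_div_iff₀ (by linarith)]; linarith
    linarith [neg_two_mul_log_le_renyiEntropy_add hV hVM hM hθ0 hθ1 c hc,
      renyiEntropy_le_entropy (fun j => sq_nonneg _) hVc hβ]
  have hα : Tendsto (fun θ : ℝ => 1 / (1 + θ)) (𝓝[>] 0) (𝓝[≠] 1) := by
    refine tendsto_nhdsWithin_of_tendsto_nhds_of_eventually_within _ ?_ ?_
    · have h : ContinuousAt (fun θ : ℝ => 1 / (1 + θ)) 0 := by fun_prop (disch := norm_num)
      simpa using h.tendsto.mono_left nhdsWithin_le_nhds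
    · filter_upwards [self_mem_nhdsWithin] with θ (hθ : 0 < θ)
      exact (div_lt_one (by linarith)).mpr (by linarith) |>.ne
  have hlim := (tendsto_renyiEntropy (fun i => sq_nonneg ‖c i‖) hc).comp hα
  have := ge_of_tendsto hlim (Filter.mem_of_superset (Ioo_mem_nhdsGT one_pos) hbound)
  linarith

theorem neg_two_mul_log_le_entropy_add {V : Matrix κ ι ℂ} {M : ℝ}
    (hV : ∀ x, ∑ j, ‖(V *ᵥ x) j‖ ^ 2 = ∑ i, ‖x i‖ ^ 2) (hVM : ∀ j i, ‖V j i‖ ≤ M) (hM : 0 < M)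
    (c : ι → ℂ) (hc : c ≠ 0) :
    -(2 * log M) ≤ entropy (fun i => ‖c i‖ ^ 2 / ∑ l, ‖c l‖ ^ 2) +
      entropy (fun j => ‖(V *ᵥ c) j‖ ^ 2 / ∑ l, ‖c l‖ ^ 2) := by
  set N := ∑ l, ‖c l‖ ^ 2
  have hN : 0 < N := by
    obtain ⟨l, hl⟩ := Function.ne_iff.mp hc
    exact (pow_pos (norm_pos_iff.mpr hl) 2).trans_le
      (Finset.single_le_sum (fun l _ => sq_nonneg ‖c l‖) (Finset.mem_univ l))
  set r : ℂ := (((√N)⁻¹ : ℝ) : ℂ)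
  have hr : ∀ z : ℂ, ‖r * z‖ ^ 2 = ‖z‖ ^ 2 / N := fun z => by
    rw [norm_mul, Complex.norm_real, mul_pow, norm_inv, Real.norm_of_nonneg (sqrt_nonneg _),
      inv_pow, sq_sqrt hN.le, inv_mul_eq_div]
  have hunit : ∑ i, ‖(r • c) i‖ ^ 2 = 1 := by
    simp only [Pi.smul_apply, smul_eq_mul, hr, ← Finset.sum_div]
    exact div_self hN.ne'
  have h := neg_two_mul_log_le_entropy_add_of_sum_sq_eq_one hV hVM hM (r • c) hunit
  simpa only [Matrix.mulVec_smul, Pi.smul_apply, smul_eq_mul, hr] using h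

end EntropicUncertainty

section Bases

variable {d : ℕ}

theorem star_dotProduct_self_eq {ι : Type*} [Fintype ι] (y : ι → ℂ) :
    star y ⬝ᵥ y = ((∑ i, ‖y i‖ ^ 2 : ℝ) : ℂ) := by
  simp [dotProduct, Complex.conj_mul']

theorem sum_norm_sq_mulVec_of_mem_unitaryGroup {ι : Type*} [Fintype ι] [DecidableEq ι]
    {U : Matrix ι ι ℂ} (hU : U ∈ unitaryGroup ι ℂ) (v : ι → ℂ) :
    ∑ i, ‖(U *ᵥ v) i‖ ^ 2 = ∑ i, ‖v i‖ ^ 2 := by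
  have h : star (U *ᵥ v) ⬝ᵥ (U *ᵥ v) = star v ⬝ᵥ v := by
    rw [star_mulVec, dotProduct_mulVec, vecMul_vecMul, ← star_eq_conjTranspose,
      mem_unitaryGroup_iff'.mp hU, vecMul_one]
  rw [star_dotProduct_self_eq, star_dotProduct_self_eq] at h
  exact_mod_cast h

def braMatrix (B : Fin d → Fin d → ℂ) : Matrix (Fin d) (Fin d) ℂ := of fun i k => star (B i k)

theorem braMatrix_mulVec (B : Fin d → Fin d → ℂ) (v : Fin d → ℂ) (i : Fin d) :
    (braMatrix B *ᵥ v) i = star (B i) ⬝ᵥ v := rfl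

theorem braMatrix_mul_star_apply (B C : Fin d → Fin d → ℂ) (i j : Fin d) :
    (braMatrix B * star (braMatrix C)) i j = star (B i) ⬝ᵥ C j := by
  simp [braMatrix, mul_apply, dotProduct]

theorem IsONB.braMatrix_mem_unitaryGroup {B : Fin d → Fin d → ℂ} (hB : IsONB B) :
    braMatrix B ∈ unitaryGroup (Fin d) ℂ := by
  rw [mem_unitaryGroup_iff]
  ext i j
  rw [braMatrix_mul_star_apply, hB, one_apply]

theorem IsONB.sum_outProb {B : Fin d → Fin d → ℂ} (hB : IsONB B) (M : Matrix (Fin d) (Fin d) ℂ) :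
    ∑ i, outProb M (B i) = M.trace.re := by
  set U := braMatrix B
  have hdiag : ∀ i, star (B i) ⬝ᵥ M *ᵥ B i = (U * M * star U) i i := fun i => by
    simp only [U, braMatrix, dotProduct, mulVec, mul_apply, of_apply, star_apply, Pi.star_apply,
      RCLike.star_def, RingHomCompTriple.comp_apply, RingHom.id_apply, Finset.mul_sum,
      Finset.sum_mul, mul_assoc]
    exact Finset.sum_comm
  simp only [outProb]
  rw [← Complex.re_sum, Finset.sum_congr rfl fun i _ => hdiag i]
  change (U * M * star U).trace.re = _
  rw [trace_mul_comm, ← mul_assoc, mem_unitaryGroup_iff'.mp hB.braMatrix_mem_unitaryGroup, one_mul]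

theorem outProb_sum_vecMulVec {m : ℕ} (v : Fin m → Fin d → ℂ) (x : Fin d → ℂ) :
    outProb (∑ k, vecMulVec (v k) (star (v k))) x = ∑ k, ‖star x ⬝ᵥ v k‖ ^ 2 := by
  simp only [outProb, sum_mulVec, vecMulVec_mulVec, op_smul_eq_smul, dotProduct_sum,
    dotProduct_smul, smul_eq_mul, Complex.re_sum]
  refine Finset.sum_congr rfl fun k _ => ?_
  rw [star_dotProduct, Complex.star_def, Complex.conj_mul', ← Complex.ofReal_pow,
    Complex.ofReal_re]

theorem log_le_entropy_add_entropy_of_areMUB {B₁ B₂ : Fin d → Fin d → ℂ} (hB₁ : IsONB B₁)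
    (hB₂ : IsONB B₂) (hMUB : AreMUB B₁ B₂) (x : Fin d → ℂ) (hx : x ≠ 0) :
    log d ≤ entropy (fun i => ‖star (B₁ i) ⬝ᵥ x‖ ^ 2 / ∑ l, ‖x l‖ ^ 2) +
      entropy (fun j => ‖star (B₂ j) ⬝ᵥ x‖ ^ 2 / ∑ l, ‖x l‖ ^ 2) := by
  have hU₁ := hB₁.braMatrix_mem_unitaryGroup
  have hU₂ := hB₂.braMatrix_mem_unitaryGroup
  -- The overlap matrix `(⟨B₁ i, B₂ j⟩)` is unitary, flat, and maps `B₂`-coordinates to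
  -- `B₁`-coordinates.
  have hV := sum_norm_sq_mulVec_of_mem_unitaryGroup (mul_mem hU₁ (Unitary.star_mem hU₂))
  have hVx : (braMatrix B₁ * star (braMatrix B₂)) *ᵥ (braMatrix B₂ *ᵥ x) = braMatrix B₁ *ᵥ x := by
    rw [mulVec_mulVec, mul_assoc, mem_unitaryGroup_iff'.mp hU₂, mul_one]
  have hd : 0 < (d : ℝ) := by
    obtain ⟨l, -⟩ := Function.ne_iff.mp hx
    exact_mod_cast l.pos
  have hVM : ∀ j i, ‖(braMatrix B₁ * star (braMatrix B₂)) j i‖ ≤ (√d)⁻¹ := fun j i => by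
    rw [braMatrix_mul_star_apply, ← sqrt_sq (norm_nonneg _), hMUB, one_div, sqrt_inv]
  have hx' : braMatrix B₂ *ᵥ x ≠ 0 := fun h => hx <| by
    rw [← one_mulVec x, ← mem_unitaryGroup_iff'.mp hU₂, ← mulVec_mulVec, h, mulVec_zero]
  have h := neg_two_mul_log_le_entropy_add hV hVM (by positivity) _ hx'
  rw [hVx, sum_norm_sq_mulVec_of_mem_unitaryGroup hU₂, log_inv, log_sqrt hd.le] at h
  simp only [braMatrix_mulVec] at h
  linarith

theorem log_le_entropy_add_entropy_of_posSemidef {B₁ B₂ : Fin d → Fin d → ℂ} (hB₁ : IsONB B₁)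
    (hB₂ : IsONB B₂) (hMUB : AreMUB B₁ B₂) {E : Matrix (Fin d) (Fin d) ℂ} (hE : E.PosSemidef)
    (hT : 0 < E.trace.re) :
    log d ≤ entropy (fun i => outProb E (B₁ i) / E.trace.re) +
      entropy (fun j => outProb E (B₂ j) / E.trace.re) := by
  obtain ⟨m, v, rfl⟩ := posSemidef_iff_eq_sum_vecMulVec.mp hE
  set N : Fin m → ℝ := fun k => ∑ l, ‖v k l‖ ^ 2
  have hN : ∀ {B}, IsONB B → ∀ k, ∑ i, ‖star (B i) ⬝ᵥ v k‖ ^ 2 = N k := fun hB k =>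
    sum_norm_sq_mulVec_of_mem_unitaryGroup hB.braMatrix_mem_unitaryGroup (v k)
  have htr : (∑ k, vecMulVec (v k) (star (v k))).trace.re = ∑ k, N k := by
    rw [← hB₁.sum_outProb]
    simp only [outProb_sum_vecMulVec]
    rw [Finset.sum_comm]
    exact Finset.sum_congr rfl fun k _ => hN hB₁ k
  simp only [outProb_sum_vecMulVec, htr]
  rw [htr] at hT
  have hw : ∀ k, 0 ≤ N k / ∑ l, N l := fun k =>
    div_nonneg (Finset.sum_nonneg fun l _ => sq_nonneg _) hT.le
  have hpure : ∀ k, N k / (∑ l, N l) * log d ≤ N k / (∑ l, N l) *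
      (entropy (fun i => ‖star (B₁ i) ⬝ᵥ v k‖ ^ 2 / N k) +
        entropy (fun j => ‖star (B₂ j) ⬝ᵥ v k‖ ^ 2 / N k)) := by
    intro k
    rcases eq_or_ne (v k) 0 with h | h
    · simp [N, h]
    · exact mul_le_mul_of_nonneg_left (log_le_entropy_add_entropy_of_areMUB hB₁ hB₂ hMUB _ h)
        (hw k)
  calc log d = ∑ k, N k / (∑ l, N l) * log d := by
        rw [← Finset.sum_mul, ← Finset.sum_div, div_self hT.ne', one_mul]
    _ ≤ _ := Finset.sum_le_sum fun k _ => hpure k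
    _ = _ := by simp only [mul_add, Finset.sum_add_distrib]
    _ ≤ _ := add_le_add
        (sum_mul_entropy_le_entropy_sum _ N (fun _ _ => sq_nonneg _) (hN hB₁) hT)
        (sum_mul_entropy_le_entropy_sum _ N (fun _ _ => sq_nonneg _) (hN hB₂) hT)

theorem logb_le_shannonEntropy_add_of_posSemidef {B₁ B₂ : Fin d → Fin d → ℂ}
    (hB₁ : IsONB B₁) (hB₂ : IsONB B₂) (hMUB : AreMUB B₁ B₂) {E : Matrix (Fin d) (Fin d) ℂ}
    (hE : E.PosSemidef) (hT : 0 < E.trace.re) :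
    logb 2 d ≤ shannonEntropy (fun i => outProb E (B₁ i) / E.trace.re) +
      shannonEntropy (fun j => outProb E (B₂ j) / E.trace.re) := by
  rw [shannonEntropy_eq_entropy_div, shannonEntropy_eq_entropy_div, ← add_div, logb,
    div_le_div_iff_of_pos_right (log_pos one_lt_two)]
  exact log_le_entropy_add_entropy_of_posSemidef hB₁ hB₂ hMUB hE hT

theorem IsONB.mutInfo_uniform {S : Type*} [Fintype S] {B : Fin d → Fin d → ℂ} (hB : IsONB B)
    (E : S → Matrix (Fin d) (Fin d) ℂ) :
    mutInfo B (fun _ => 1 / (d : ℝ)) E = logb 2 d - ∑ s, (E s).trace.re / d *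
      shannonEntropy (fun i => outProb (E s) (B i) / (E s).trace.re) := by
  simp only [mutInfo, shannonEntropy_uniform, ← Finset.mul_sum, hB.sum_outProb]
  congr 1
  refine Finset.sum_congr rfl fun s _ => ?_
  rw [one_div_mul_eq_div]
  congr 2
  funext i
  rw [one_div_mul_eq_div, div_div_div_cancel_right₀ (by exact_mod_cast i.pos.ne')]

end Bases

theorem two_mub_uniform_info_bound_general
    {S : Type*} [Fintype S] (d : ℕ)
    (B₁ B₂ : Fin d → Fin d → ℂ)
    (hB₁ : IsONB B₁) (hB₂ : IsONB B₂) (hMUB : AreMUB B₁ B₂)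
    (E : S → Matrix (Fin d) (Fin d) ℂ) (hE : IsPOVM E) :
    mutInfo B₁ (fun _ => 1 / (d : ℝ)) E + mutInfo B₂ (fun _ => 1 / (d : ℝ)) E
      ≤ Real.logb 2 d := by
  obtain ⟨hpsd, hsum⟩ := hE
  set T : S → ℝ := fun s => (E s).trace.re
  have hT : ∑ s, T s = d := by
    simp [T, ← Complex.re_sum, ← trace_sum, hsum]
  have hbound : ∀ s, T s / d * logb 2 d ≤ T s / d *
      (shannonEntropy (fun i => outProb (E s) (B₁ i) / T s) +
        shannonEntropy (fun j => outProb (E s) (B₂ j) / T s)) := by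
    intro s
    rcases (Complex.nonneg_iff.mp (hpsd s).trace_nonneg).1.eq_or_lt with h | h
    · simp [T, ← h]
    · exact mul_le_mul_of_nonneg_left
        (logb_le_shannonEntropy_add_of_posSemidef hB₁ hB₂ hMUB (hpsd s) h) (by positivity)
  have hlogb : logb 2 d = ∑ s, T s / d * logb 2 d := by
    rw [← Finset.sum_mul, ← Finset.sum_div, hT]
    rcases eq_or_ne (d : ℝ) 0 with h | h
    · simp [h]
    · rw [div_self h, one_mul]
  rw [hB₁.mutInfo_uniform, hB₂.mutInfo_uniform, hlogb]
  have := Finset.sum_le_sum fun s (_ : s ∈ Finset.univ) => hbound s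
  simp only [mul_add, Finset.sum_add_distrib] at this
  linarith

/-- Two MUBs, uniform priors: `I₁ + I₂ ≤ log₂ d`. -/
theorem two_mub_uniform_info_bound
    {S : Type*} [Fintype S] (d : ℕ) (hd : 2 ≤ d)
    (B₁ B₂ : Fin d → Fin d → ℂ)
    (hB₁ : IsONB B₁) (hB₂ : IsONB B₂) (hMUB : AreMUB B₁ B₂)
    (E : S → Matrix (Fin d) (Fin d) ℂ) (hE : IsPOVM E) :
    mutInfo B₁ (fun _ => 1 / (d : ℝ)) E + mutInfo B₂ (fun _ => 1 / (d : ℝ)) E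
      ≤ Real.logb 2 d :=
  two_mub_uniform_info_bound_general d B₁ B₂ hB₁ hB₂ hMUB E hE
end
end

section
/- Suppose Alice prepares a qudit in a basis state of one of two mutually unbiased bases of ℂ^d, with arbitrary prior probability distributions {p_i^(1)} and {p_i^(2)} on the basis states, and Bob measures with an arbitrary POVM. Writing p_1^(m) = max_i p_i^(m) for the largest prior probability in the m-th basis, the mutual information satisfies (1/(d p_1^(1))) I_1 + (1/(d p_1^(2))) I_2 ≤ log₂ d. -/
open scoped BigOperators ComplexOrder
open Matrix

noncomputable section

/-!
Write `a s i = ⟨i₁|E_s|i₁⟩`, `b s j = ⟨j₂|E_s|j₂⟩` and `t s = tr E_s`, so that `∑ s, a s i = 1`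
and `∑ i, a s i = t s = ∑ j, b s j`. Gibbs' inequality against the reference distribution
`r s = t s / d` bounds the information about the first basis by `q₁` times
`∑ i, D(a · i ‖ r) = ∑ s, (t s log d - t s H(a s · / t s))`, and likewise for the second basis.
The Maassen–Uffink uncertainty relation `H(a s · / t s) + H(b s · / t s) ≥ log d` then bounds the
sum of the two right-hand sides by `∑ s, t s log d = d log d`. Maassen–Uffink is proved for pure
states by differentiating, at the `ℓ²` endpoint, the Riesz–Thorin bound that Hadamard's three
lines theorem gives; it extends to `E_s = Aᴴ A` because `t H(x / t)` is superadditive.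
-/

open Finset Real

lemma norm_sq_smul_eq_smul {ι : Type*} (c : ℂ) (v : ι → ℂ) :
    (fun i => ‖(c • v) i‖ ^ 2) = ‖c‖ ^ 2 • fun i => ‖v i‖ ^ 2 := by
  ext i
  simp [mul_pow]

section

variable {ι : Type*} [Fintype ι]

lemma star_dotProduct_self_eq_sum_norm_sq (x : ι → ℂ) :
    star x ⬝ᵥ x = ((∑ i, ‖x i‖ ^ 2 : ℝ) : ℂ) := by
  simp [dotProduct, RCLike.conj_mul]

lemma sum_norm_sq_mulVec_of_conjTranspose_mul_eq_one [DecidableEq ι] {U : Matrix ι ι ℂ}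
    (hU : Uᴴ * U = 1) (x : ι → ℂ) : ∑ i, ‖(U *ᵥ x) i‖ ^ 2 = ∑ i, ‖x i‖ ^ 2 := by
  have h : star (U *ᵥ x) ⬝ᵥ (U *ᵥ x) = star x ⬝ᵥ x := by
    rw [star_mulVec, dotProduct_mulVec, vecMul_vecMul, hU, vecMul_one]
  rw [star_dotProduct_self_eq_sum_norm_sq, star_dotProduct_self_eq_sum_norm_sq] at h
  exact_mod_cast h

lemma norm_dotProduct_le (x y : ι → ℂ) :
    ‖x ⬝ᵥ y‖ ≤ √(∑ i, ‖x i‖ ^ 2) * √(∑ i, ‖y i‖ ^ 2) :=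
  (norm_sum_le _ _).trans <| by
    simpa only [norm_mul] using Real.sum_mul_le_sqrt_mul_sqrt univ (‖x ·‖) (‖y ·‖)

lemma norm_le_one_of_sum_norm_sq_eq_one {x : ι → ℂ} (hx : ∑ i, ‖x i‖ ^ 2 = 1) (i : ι) :
    ‖x i‖ ≤ 1 := by
  have : ‖x i‖ ^ 2 ≤ 1 :=
    hx ▸ single_le_sum (f := fun j => ‖x j‖ ^ 2) (fun j _ => by positivity) (mem_univ i)
  exact (sq_le_one_iff₀ (norm_nonneg _)).mp this

lemma sum_norm_rpow_pos_of_sum_norm_sq_eq_one {x : ι → ℂ} (hx : ∑ i, ‖x i‖ ^ 2 = 1) (e : ℝ) :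
    0 < ∑ i, ‖x i‖ ^ e := by
  obtain ⟨i, hi⟩ : ∃ i, x i ≠ 0 := by
    by_contra! h
    simp [h] at hx
  exact sum_pos' (fun j _ => Real.rpow_nonneg (norm_nonneg _) _)
    ⟨i, mem_univ i, Real.rpow_pos_of_pos (norm_pos_iff.mpr hi) _⟩

end

/-- `‖w‖ ^ s` times the phase `w / ‖w‖` of `w`; it vanishes at `w = 0`, where `w / ‖w‖ = 0`. -/
def phasePow (w s : ℂ) : ℂ := Complex.exp (s * log ‖w‖) * (w / ‖w‖)

lemma norm_phasePow_le (w s : ℂ) : ‖phasePow w s‖ ≤ ‖w‖ ^ s.re := by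
  rcases eq_or_ne w 0 with rfl | hw
  · simp only [phasePow, zero_div, mul_zero, norm_zero]
    exact Real.rpow_nonneg le_rfl _
  · have hw' : 0 < ‖w‖ := norm_pos_iff.mpr hw
    rw [phasePow, norm_mul, Complex.norm_exp, norm_div, Complex.norm_real, norm_norm,
      div_self hw'.ne', mul_one, Real.rpow_def_of_pos hw', mul_comm (log _)]
    simp

lemma phasePow_ofReal (w : ℂ) (x : ℝ) : phasePow w x = (‖w‖ ^ (x - 1) : ℝ) * w := by
  rcases eq_or_ne w 0 with rfl | hw
  · simp [phasePow]
  · have hw' : 0 < ‖w‖ := norm_pos_iff.mpr hw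
    rw [phasePow, ← Complex.ofReal_mul, ← Complex.ofReal_exp, mul_comm x,
      ← Real.rpow_def_of_pos hw', Real.rpow_sub_one hw'.ne']
    push_cast
    field_simp

lemma norm_phasePow_one_add_div_le (w z : ℂ) (r : ℝ) :
    ‖phasePow w ((1 + z) / r)‖ ≤ ‖w‖ ^ ((1 + z.re) / r) := by
  simpa using norm_phasePow_le w ((1 + z) / r)

lemma norm_phasePow_sq_le_of_re_eq_zero (w : ℂ) {z : ℂ} (hz : z.re = 0) (r : ℝ) :
    ‖phasePow w ((1 + z) / r)‖ ^ 2 ≤ ‖w‖ ^ (2 / r) :=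
  calc _ ≤ (‖w‖ ^ ((1 + z.re) / r)) ^ 2 :=
        pow_le_pow_left₀ (norm_nonneg _) (norm_phasePow_one_add_div_le w z r) 2
    _ = _ := by rw [hz, ← Real.rpow_mul_natCast (norm_nonneg _)]; ring_nf

lemma phasePow_star_mul_self (w : ℂ) {x : ℝ} (hx : x + 1 ≠ 0) :
    phasePow (star w) x * w = (‖w‖ ^ (x + 1) : ℝ) := by
  rw [phasePow_ofReal, norm_star, mul_assoc, RCLike.star_def, RCLike.conj_mul,
    show x + 1 = (x - 1) + 2 by ring, Real.rpow_add' (norm_nonneg _) (by convert hx using 1; ring),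
    Complex.ofReal_mul, Real.rpow_two, Complex.ofReal_pow]
  rfl

section

variable {ι : Type*} [Fintype ι]

/-- The Riesz–Thorin interpolating function for the exponents `p = 2 / (1 + θ)` and
`p' = 2 / (1 - θ)`: the moduli of `a` and `b` are raised to the powers `(1 + z) p / 2` and
`(1 + z) p' / 2`. -/
def interpFun (T : Matrix ι ι ℂ) (a b : ι → ℂ) (θ : ℝ) (z : ℂ) : ℂ :=
  (fun j => phasePow (star (b j)) ((1 + z) / (1 - θ : ℝ))) ⬝ᵥ
    (T *ᵥ fun i => phasePow (a i) ((1 + z) / (1 + θ : ℝ)))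

lemma differentiable_interpFun (T : Matrix ι ι ℂ) (a b : ι → ℂ) (θ : ℝ) :
    Differentiable ℂ (interpFun T a b θ) := by
  unfold interpFun phasePow dotProduct mulVec dotProduct
  fun_prop

lemma norm_interpFun_le (T : Matrix ι ι ℂ) (a b : ι → ℂ) (θ : ℝ) (z : ℂ) :
    ‖interpFun T a b θ z‖ ≤ ∑ j, ‖b j‖ ^ ((1 + z.re) / (1 - θ)) *
      ∑ i, ‖T j i‖ * ‖a i‖ ^ ((1 + z.re) / (1 + θ)) := by
  refine (norm_sum_le _ _).trans (sum_le_sum fun j _ => ?_)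
  rw [norm_mul]
  refine mul_le_mul ?_ ((norm_sum_le _ _).trans (sum_le_sum fun i _ => ?_)) (norm_nonneg _)
    (Real.rpow_nonneg (norm_nonneg _) _)
  · simpa using norm_phasePow_one_add_div_le (star (b j)) z (1 - θ)
  · rw [norm_mul]
    exact mul_le_mul_of_nonneg_left (norm_phasePow_one_add_div_le _ _ _) (norm_nonneg _)

lemma norm_interpFun_le_of_re_eq_zero [DecidableEq ι] {T : Matrix ι ι ℂ} (hT : Tᴴ * T = 1)
    (a b : ι → ℂ) (θ : ℝ) {z : ℂ} (hz : z.re = 0) :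
    ‖interpFun T a b θ z‖ ≤
      √(∑ j, ‖b j‖ ^ (2 / (1 - θ))) * √(∑ i, ‖a i‖ ^ (2 / (1 + θ))) := by
  refine (norm_dotProduct_le _ _).trans ?_
  rw [sum_norm_sq_mulVec_of_conjTranspose_mul_eq_one hT]
  gcongr with j _ i _
  · simpa using norm_phasePow_sq_le_of_re_eq_zero (star (b j)) hz (1 - θ)
  · exact norm_phasePow_sq_le_of_re_eq_zero (a i) hz (1 + θ)

lemma norm_interpFun_le_of_re_eq_one {T : Matrix ι ι ℂ} {c : ℝ} (hTc : ∀ j i, ‖T j i‖ ≤ c)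
    (a b : ι → ℂ) (θ : ℝ) {z : ℂ} (hz : z.re = 1) :
    ‖interpFun T a b θ z‖ ≤
      c * (∑ j, ‖b j‖ ^ (2 / (1 - θ))) * ∑ i, ‖a i‖ ^ (2 / (1 + θ)) := by
  calc _ ≤ _ := norm_interpFun_le T a b θ z
    _ ≤ ∑ j, ‖b j‖ ^ (2 / (1 - θ)) * ∑ i, c * ‖a i‖ ^ (2 / (1 + θ)) := by
        rw [hz, one_add_one_eq_two]
        gcongr with j _ i _
        exact hTc j i
    _ = _ := by simp only [← mul_sum, ← sum_mul]; ring

lemma norm_interpFun_le_sum_sum_norm (T : Matrix ι ι ℂ) {a b : ι → ℂ} (ha : ∀ i, ‖a i‖ ≤ 1)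
    (hb : ∀ j, ‖b j‖ ≤ 1) {θ : ℝ} (hθ : |θ| < 1) {z : ℂ} (hz : 0 ≤ z.re) :
    ‖interpFun T a b θ z‖ ≤ ∑ j, ∑ i, ‖T j i‖ := by
  obtain ⟨hθ₁, hθ₂⟩ := abs_lt.mp hθ
  have hpow : ∀ (w : ℂ) (r : ℝ), ‖w‖ ≤ 1 → 0 < r → ‖w‖ ^ ((1 + z.re) / r) ≤ 1 :=
    fun w r hw hr => Real.rpow_le_one (norm_nonneg _) hw (by positivity)
  refine (norm_interpFun_le T a b θ z).trans (sum_le_sum fun j _ => ?_)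
  refine (mul_le_of_le_one_left (by positivity) (hpow _ _ (hb j) (by linarith))).trans ?_
  exact sum_le_sum fun i _ =>
    mul_le_of_le_one_right (norm_nonneg _) (hpow _ _ (ha i) (by linarith))

lemma interpFun_mulVec_self_ofReal (T : Matrix ι ι ℂ) (a : ι → ℂ) {θ : ℝ} (hθ : |θ| < 1) :
    interpFun T a (T *ᵥ a) θ θ = ((∑ j, ‖(T *ᵥ a) j‖ ^ (2 / (1 - θ)) : ℝ) : ℂ) := by
  obtain ⟨hθ₁, hθ₂⟩ := abs_lt.mp hθ
  have hinner : (fun i => phasePow (a i) ((1 + θ) / (1 + θ : ℝ))) = a := by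
    funext i
    rw [show (1 + (θ : ℂ)) / ((1 + θ : ℝ) : ℂ) = ((1 : ℝ) : ℂ) by
      push_cast; exact div_self (by exact_mod_cast (by linarith : (1 + θ) ≠ 0)), phasePow_ofReal]
    simp
  have hexp : (1 + θ) / (1 - θ) + 1 = 2 / (1 - θ) := by field_simp; ring
  rw [interpFun, hinner, dotProduct, Complex.ofReal_sum]
  refine sum_congr rfl fun j _ => ?_
  rw [show (1 + (θ : ℂ)) / ((1 - θ : ℝ) : ℂ) = (((1 + θ) / (1 - θ) : ℝ) : ℂ) by push_cast; rfl,
    phasePow_star_mul_self _ (by rw [hexp]; exact div_ne_zero two_ne_zero (by linarith)), hexp]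

open Complex.HadamardThreeLines in
/-- Riesz–Thorin for a unitary `T` with entries bounded by `c`, interpolating between
`ℓ² → ℓ²` (norm `1`) and `ℓ¹ → ℓ^∞` (norm `c`), in logarithmic form. -/
theorem riesz_thorin_log_le [DecidableEq ι] {T : Matrix ι ι ℂ} (hT : Tᴴ * T = 1) {c : ℝ}
    (hc : 0 < c) (hTc : ∀ j i, ‖T j i‖ ≤ c) {a : ι → ℂ} (ha : ∑ i, ‖a i‖ ^ 2 = 1) {θ : ℝ}
    (hθ : θ ∈ Set.Ioo 0 1) :
    (1 - θ) / 2 * log (∑ j, ‖(T *ᵥ a) j‖ ^ (2 / (1 - θ))) ≤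
      (1 + θ) / 2 * log (∑ i, ‖a i‖ ^ (2 / (1 + θ))) + θ * log c := by
  obtain ⟨hθ₀, hθ₁⟩ := hθ
  have hb : ∑ j, ‖(T *ᵥ a) j‖ ^ 2 = 1 := by
    rw [sum_norm_sq_mulVec_of_conjTranspose_mul_eq_one hT, ha]
  set W := ∑ j, ‖(T *ᵥ a) j‖ ^ (2 / (1 - θ))
  set Y := ∑ i, ‖a i‖ ^ (2 / (1 + θ))
  have hW : 0 < W := sum_norm_rpow_pos_of_sum_norm_sq_eq_one hb _
  have hY : 0 < Y := sum_norm_rpow_pos_of_sum_norm_sq_eq_one ha _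
  have hθabs : |θ| < 1 := abs_lt.mpr ⟨by linarith, hθ₁⟩
  have hthree : W ≤ (√W * √Y) ^ (1 - θ) * (c * W * Y) ^ θ := by
    have := norm_le_interp_of_mem_verticalClosedStrip₀₁' (interpFun T a (T *ᵥ a) θ)
      (z := θ) (by simp [verticalClosedStrip, hθ₀.le, hθ₁.le])
      (differentiable_interpFun _ _ _ _).diffContOnCl
      ⟨_, Set.forall_mem_image.mpr fun z hz => norm_interpFun_le_sum_sum_norm T
        (norm_le_one_of_sum_norm_sq_eq_one ha) (norm_le_one_of_sum_norm_sq_eq_one hb) hθabs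
        hz.1⟩
      (fun z hz => norm_interpFun_le_of_re_eq_zero hT _ _ _ hz)
      (fun z hz => norm_interpFun_le_of_re_eq_one hTc _ _ _ hz)
    rwa [interpFun_mulVec_self_ofReal _ _ hθabs, Complex.norm_real, Real.norm_of_nonneg hW.le,
      Complex.ofReal_re] at this
  have hlog := Real.log_le_log hW hthree
  rw [Real.log_mul (by positivity) (by positivity), Real.log_rpow (by positivity),
    Real.log_rpow (by positivity), Real.log_mul (by positivity) hY.ne',
    Real.log_mul hc.ne' hW.ne', Real.log_mul (by positivity) (by positivity),
    Real.log_sqrt hW.le, Real.log_sqrt hY.le] at hlog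
  linear_combination hlog

end

lemma HasDerivAt.nonneg_of_forall_Ioo_le {f : ℝ → ℝ} {f' a b : ℝ} (hf : HasDerivAt f f' a)
    (hab : a < b) (h : ∀ x ∈ Set.Ioo a b, f a ≤ f x) : 0 ≤ f' := by
  have hslope := (hasDerivAt_iff_tendsto_slope.mp hf).mono_left
    (nhdsWithin_mono a (show Set.Ioi a ⊆ {a}ᶜ from fun x hx => ne_of_gt hx))
  refine ge_of_tendsto hslope ?_
  filter_upwards [Ioo_mem_nhdsGT hab] with x hx
  rw [slope_def_field]
  exact div_nonneg (sub_nonneg.mpr (h x hx)) (sub_nonneg.mpr hx.1.le)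

lemma hasDerivAt_rpow_one_div_one_add {u : ℝ} (hu : 0 ≤ u) :
    HasDerivAt (fun θ : ℝ => u ^ (1 / (1 + θ))) (negMulLog u) 0 := by
  rcases hu.eq_or_lt with rfl | hu
  · refine (hasDerivAt_const (0 : ℝ) (0 : ℝ)).congr_of_eventuallyEq ?_ |>.congr_deriv (by simp)
    filter_upwards [Ioi_mem_nhds (show (-1 : ℝ) < 0 by norm_num)] with θ hθ
    exact Real.zero_rpow (one_div_ne_zero (by linarith [Set.mem_Ioi.mp hθ]))
  · have hf : HasDerivAt (fun θ : ℝ => 1 / (1 + θ)) (-1) 0 := by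
      simpa using ((hasDerivAt_id (0 : ℝ)).const_add 1).fun_inv (by norm_num)
    convert hf.const_rpow hu using 1
    simp only [negMulLog, add_zero, div_one, Real.rpow_one]
    ring

/-- `(1 + θ) / 2 * log ∑ uᵢ ^ (1 / (1 + θ))` is `θ / 2` times the Rényi entropy of order
`1 / (1 + θ)`; its slope at `θ = 0` is half the Shannon entropy. -/
lemma hasDerivAt_mul_log_sum_rpow_one_div_one_add {ι : Type*} [Fintype ι] {u : ι → ℝ}
    (hu : ∀ i, 0 ≤ u i) (hsum : ∑ i, u i = 1) :
    HasDerivAt (fun θ : ℝ => (1 + θ) / 2 * log (∑ i, u i ^ (1 / (1 + θ))))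
      ((∑ i, negMulLog (u i)) / 2) 0 := by
  have hS : HasDerivAt (fun θ : ℝ => ∑ i, u i ^ (1 / (1 + θ))) (∑ i, negMulLog (u i)) 0 :=
    HasDerivAt.fun_sum fun i _ => hasDerivAt_rpow_one_div_one_add (hu i)
  have hS0 : ∑ i, u i ^ (1 / (1 + (0 : ℝ))) = 1 := by simpa using hsum
  have hlin : HasDerivAt (fun θ : ℝ => (1 + θ) / 2) (1 / 2) 0 := by
    simpa using (((hasDerivAt_id (0 : ℝ)).const_add 1).div_const 2)
  refine (hlin.mul (hS.log (by rw [hS0]; exact one_ne_zero))).congr_deriv ?_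
  rw [hS0, Real.log_one]
  ring

section

variable {ι : Type*} [Fintype ι]

/-- For `x ≥ 0` of total mass `t = ∑ i, x i`, this is `t` times the entropy (in nats) of the
probability vector `x / t`. -/
def scaledEntropy (x : ι → ℝ) : ℝ := ∑ i, negMulLog (x i) - negMulLog (∑ i, x i)

lemma scaledEntropy_zero : scaledEntropy (0 : ι → ℝ) = 0 := by
  simp [scaledEntropy]

lemma scaledEntropy_smul (c : ℝ) (x : ι → ℝ) : scaledEntropy (c • x) = c * scaledEntropy x := by
  simp only [scaledEntropy, Pi.smul_apply, smul_eq_mul, negMulLog_mul, ← mul_sum, sum_add_distrib,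
    ← sum_mul]
  ring

lemma scaledEntropy_of_sum_eq_one {x : ι → ℝ} (hx : ∑ i, x i = 1) :
    scaledEntropy x = ∑ i, negMulLog (x i) := by
  simp [scaledEntropy, hx]

lemma scaledEntropy_eq_neg_sum_mul_log_div {x : ι → ℝ} (hx : ∀ i, 0 ≤ x i)
    (hpos : 0 < ∑ i, x i) : scaledEntropy x = -∑ i, x i * log (x i / ∑ j, x j) := by
  rw [scaledEntropy, negMulLog, neg_mul, sub_neg_eq_add, sum_mul, ← sum_neg_distrib,
    ← sum_add_distrib]
  refine sum_congr rfl fun i _ => ?_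
  rcases (hx i).eq_or_lt with h | h
  · simp [← h]
  · rw [log_div h.ne' hpos.ne', negMulLog]
    ring

lemma scaledEntropy_eq_sum_mul_sum_negMulLog_div {x : ι → ℝ}
    (hx : ∀ i, 0 ≤ x i) :
    scaledEntropy x = (∑ i, x i) * ∑ i, negMulLog (x i / ∑ j, x j) := by
  rcases (sum_nonneg fun i _ => hx i : 0 ≤ ∑ i, x i).eq_or_lt with ht | ht
  · have hx0 : x = 0 := funext fun i =>
      (sum_eq_zero_iff_of_nonneg fun j _ => hx j).mp ht.symm i (mem_univ i)
    simp [hx0, scaledEntropy_zero]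
  rw [scaledEntropy_eq_neg_sum_mul_log_div hx ht, mul_sum, ← sum_neg_distrib]
  refine sum_congr rfl fun i _ => ?_
  rw [negMulLog, ← mul_assoc, mul_neg, mul_div_cancel₀ _ ht.ne', neg_mul]

lemma sum_mul_log_sub_log_div_eq {x : ι → ℝ} (hx : ∀ i, 0 ≤ x i)
    {d : ℝ} (hd : d ≠ 0) :
    ∑ i, x i * (log (x i) - log ((∑ j, x j) / d)) = (∑ i, x i) * log d - scaledEntropy x := by
  rcases (sum_nonneg fun i _ => hx i : 0 ≤ ∑ i, x i).eq_or_lt with ht | ht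
  · have hx0 : x = 0 := funext fun i =>
      (sum_eq_zero_iff_of_nonneg fun j _ => hx j).mp ht.symm i (mem_univ i)
    simp [hx0, scaledEntropy_zero]
  rw [scaledEntropy, log_div ht.ne' hd]
  simp only [negMulLog, mul_sub, sum_sub_distrib, ← sum_mul, neg_mul, sum_neg_distrib]
  ring

theorem scaledEntropy_le_neg_sum_mul_log {x r : ι → ℝ} (hx : ∀ i, 0 ≤ x i) (hr : ∀ i, 0 ≤ r i)
    (hr1 : ∑ i, r i = 1) (hxr : ∀ i, r i = 0 → x i = 0) :
    scaledEntropy x ≤ -∑ i, x i * log (r i) := by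
  set t := ∑ i, x i
  rcases (sum_nonneg fun i _ => hx i : 0 ≤ t).eq_or_lt with ht | ht
  · have hx0 : ∀ i, x i = 0 := fun i => (sum_eq_zero_iff_of_nonneg fun j _ => hx j).mp ht.symm i
      (mem_univ i)
    simp [scaledEntropy, hx0]
  -- termwise `log y ≤ y - 1` at `y = r i * t / x i`
  have hterm : ∀ i, x i * (log (r i) - log (x i / t)) ≤ r i * t - x i := fun i => by
    rcases (hx i).eq_or_lt with h | h
    · simpa [← h] using mul_nonneg (hr i) ht.le
    have hri : 0 < r i := (hr i).lt_of_ne fun h' => h.ne' (hxr i h'.symm)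
    have := log_le_sub_one_of_pos (show 0 < r i * t / x i by positivity)
    rw [log_div (by positivity) h.ne', log_mul hri.ne' ht.ne'] at this
    rw [log_div h.ne' ht.ne']
    calc _ ≤ x i * (r i * t / x i - 1) := by nlinarith
      _ = _ := by field_simp
  have hsum := sum_le_sum fun i (_ : i ∈ univ) => hterm i
  rw [sum_sub_distrib, ← sum_mul, hr1, one_mul, sub_self] at hsum
  rw [scaledEntropy_eq_neg_sum_mul_log_div hx ht]
  simp only [mul_sub, sum_sub_distrib] at hsum
  linarith

theorem sum_scaledEntropy_le {κ : Type*} [Fintype κ] {x : κ → ι → ℝ} (hx : ∀ k i, 0 ≤ x k i) :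
    ∑ k, scaledEntropy (x k) ≤ scaledEntropy (∑ k, x k) := by
  set z := ∑ k, x k
  have hz : ∀ i, 0 ≤ z i := fun i => by simpa [z] using sum_nonneg fun k _ => hx k i
  have hxz : ∀ k i, x k i ≤ z i := fun k i => by
    simpa [z] using single_le_sum (f := fun k => x k i) (fun k _ => hx k i) (mem_univ k)
  set t := ∑ i, z i
  rcases (sum_nonneg fun i _ => hz i : 0 ≤ t).eq_or_lt with ht | ht
  · have hx0 : ∀ k, x k = 0 := fun k => funext fun i => le_antisymm
      ((hxz k i).trans ((sum_eq_zero_iff_of_nonneg fun j _ => hz j).mp ht.symm i (mem_univ i)).le)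
      (hx k i)
    have hz0 : z = 0 := by simp [z, hx0]
    simp [hx0, hz0, scaledEntropy_zero]
  -- every `scaledEntropy (x k)` is at most the cross entropy against `z / t`
  calc ∑ k, scaledEntropy (x k) ≤ ∑ k, -∑ i, x k i * log (z i / t) :=
        sum_le_sum fun k _ => scaledEntropy_le_neg_sum_mul_log (hx k)
          (fun i => div_nonneg (hz i) ht.le)
          (by rw [← sum_div, div_self ht.ne'])
          fun i hi => le_antisymm ((hxz k i).trans_eq
            ((div_eq_zero_iff.mp hi).resolve_right ht.ne')) (hx k i)
    _ = -∑ i, z i * log (z i / t) := by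
        simp only [z, Finset.sum_apply, sum_mul, ← sum_neg_distrib]
        exact sum_comm
    _ = scaledEntropy z := (scaledEntropy_eq_neg_sum_mul_log_div hz ht).symm

end

section

variable {ι : Type*} [Fintype ι]

lemma sq_rpow_one_div (x : ℝ) (hx : 0 ≤ x) (r : ℝ) : (x ^ 2) ^ (1 / r) = x ^ (2 / r) := by
  rw [← Real.rpow_natCast, ← Real.rpow_mul hx]
  ring_nf

theorem maassen_uffink [DecidableEq ι] {T : Matrix ι ι ℂ} (hT : Tᴴ * T = 1) {c : ℝ}
    (hc : 0 < c) (hTc : ∀ j i, ‖T j i‖ ≤ c) {a : ι → ℂ} (ha : ∑ i, ‖a i‖ ^ 2 = 1) :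
    -(2 * log c) ≤
      ∑ i, negMulLog (‖a i‖ ^ 2) + ∑ j, negMulLog (‖(T *ᵥ a) j‖ ^ 2) := by
  have hb : ∑ j, ‖(T *ᵥ a) j‖ ^ 2 = 1 := by
    rw [sum_norm_sq_mulVec_of_conjTranspose_mul_eq_one hT, ha]
  set F : (ι → ℂ) → ℝ → ℝ := fun x θ => (1 + θ) / 2 * log (∑ i, (‖x i‖ ^ 2) ^ (1 / (1 + θ)))
  have hF : ∀ x : ι → ℂ, ∑ i, ‖x i‖ ^ 2 = 1 →
      HasDerivAt (F x) ((∑ i, negMulLog (‖x i‖ ^ 2)) / 2) 0 := fun x hx =>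
    hasDerivAt_mul_log_sum_rpow_one_div_one_add (fun i => by positivity) hx
  have hF0 : ∀ x : ι → ℂ, ∑ i, ‖x i‖ ^ 2 = 1 → F x 0 = 0 := fun x hx => by simp [F, hx]
  set K : ℝ → ℝ := fun θ => F a θ - F (T *ᵥ a) (-θ) + θ * log c
  have hK : HasDerivAt K ((∑ i, negMulLog (‖a i‖ ^ 2)) / 2 +
      (∑ j, negMulLog (‖(T *ᵥ a) j‖ ^ 2)) / 2 + log c) 0 := by
    have hneg := ((hF _ hb).comp_of_eq (0 : ℝ) (hasDerivAt_neg 0) neg_zero.symm)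
    exact (((hF a ha).sub hneg).add ((hasDerivAt_id (0 : ℝ)).mul_const (log c))).congr_deriv
      (by ring)
  have hK0 : K 0 = 0 := by simp [K, hF0 a ha, hF0 _ hb]
  have hKpos : ∀ θ ∈ Set.Ioo (0 : ℝ) 1, K 0 ≤ K θ := fun θ hθ => by
    have hRT := riesz_thorin_log_le hT hc hTc ha hθ
    rw [hK0]
    simp only [K, F, ← sub_eq_add_neg, sq_rpow_one_div _ (norm_nonneg _)]
    linarith
  linarith [hK.nonneg_of_forall_Ioo_le one_pos hKpos]

theorem maassen_uffink_scaledEntropy [DecidableEq ι] {T : Matrix ι ι ℂ} (hT : Tᴴ * T = 1)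
    {c : ℝ} (hc : 0 < c) (hTc : ∀ j i, ‖T j i‖ ≤ c) (a : ι → ℂ) :
    -(2 * log c) * ∑ i, ‖a i‖ ^ 2 ≤
      scaledEntropy (fun i => ‖a i‖ ^ 2) + scaledEntropy (fun j => ‖(T *ᵥ a) j‖ ^ 2) := by
  rcases (sum_nonneg fun i _ => by positivity : 0 ≤ ∑ i, ‖a i‖ ^ 2).eq_or_lt with hn | hn
  · have ha : a = 0 := funext fun i => norm_eq_zero.mp <| pow_eq_zero_iff two_ne_zero |>.mp <|
      (sum_eq_zero_iff_of_nonneg fun j _ => by positivity).mp hn.symm i (mem_univ i)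
    simp [ha, ← Pi.zero_def, scaledEntropy_zero]
  set n := ∑ i, ‖a i‖ ^ 2
  have hnorm : ‖((√n : ℝ) : ℂ)‖ ^ 2 = n := by
    rw [Complex.norm_real, norm_of_nonneg (sqrt_nonneg _), sq_sqrt hn.le]
  obtain ⟨â, hâ, hâ1⟩ : ∃ â : ι → ℂ, a = ((√n : ℝ) : ℂ) • â ∧ ∑ i, ‖â i‖ ^ 2 = 1 := by
    refine ⟨((√n : ℝ) : ℂ)⁻¹ • a, ?_, ?_⟩
    · rw [smul_inv_smul₀ (by exact_mod_cast (sqrt_pos.mpr hn).ne')]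
    · simp only [Pi.smul_apply, norm_smul, mul_pow, ← mul_sum, norm_inv, inv_pow, hnorm]
      exact inv_mul_cancel₀ hn.ne'
  have hmu := maassen_uffink hT hc hTc hâ1
  rw [hâ, mulVec_smul, norm_sq_smul_eq_smul, norm_sq_smul_eq_smul, scaledEntropy_smul,
    scaledEntropy_smul, hnorm, scaledEntropy_of_sum_eq_one hâ1,
    scaledEntropy_of_sum_eq_one (by rwa [sum_norm_sq_mulVec_of_conjTranspose_mul_eq_one hT])]
  nlinarith

end

section

variable {d : ℕ}

lemma outProb_conjTranspose_mul_self (A : Matrix (Fin d) (Fin d) ℂ) (v : Fin d → ℂ) :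
    outProb (Aᴴ * A) v = ∑ k, ‖(A *ᵥ v) k‖ ^ 2 := by
  rw [outProb, ← mulVec_mulVec, dotProduct_mulVec, ← star_mulVec,
    star_dotProduct_self_eq_sum_norm_sq, Complex.ofReal_re]

lemma outProb_nonneg {M : Matrix (Fin d) (Fin d) ℂ} (hM : M.PosSemidef) (v : Fin d → ℂ) :
    0 ≤ outProb M v :=
  (Complex.nonneg_iff.mp (hM.dotProduct_mulVec_nonneg v)).1

lemma outProb_sum {S : Type*} [Fintype S] (E : S → Matrix (Fin d) (Fin d) ℂ) (v : Fin d → ℂ) :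
    outProb (∑ s, E s) v = ∑ s, outProb (E s) v := by
  simp [outProb, sum_mulVec, dotProduct_sum, Complex.re_sum]

def coordMatrix (B : Fin d → Fin d → ℂ) : Matrix (Fin d) (Fin d) ℂ :=
  Matrix.of fun i k => star (B i k)

lemma coordMatrix_mulVec (B : Fin d → Fin d → ℂ) (x : Fin d → ℂ) :
    coordMatrix B *ᵥ x = fun i => star (B i) ⬝ᵥ x := rfl

namespace IsONB

variable {B : Fin d → Fin d → ℂ}

lemma coordMatrix_mul_conjTranspose (hB : IsONB B) : coordMatrix B * (coordMatrix B)ᴴ = 1 := by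
  ext i j
  simpa [coordMatrix, Matrix.mul_apply, dotProduct, Matrix.one_apply] using hB i j

lemma conjTranspose_mul_coordMatrix (hB : IsONB B) : (coordMatrix B)ᴴ * coordMatrix B = 1 :=
  mul_eq_one_comm.mp hB.coordMatrix_mul_conjTranspose

lemma sum_norm_sq_dotProduct (hB : IsONB B) (x : Fin d → ℂ) :
    ∑ i, ‖star (B i) ⬝ᵥ x‖ ^ 2 = ∑ k, ‖x k‖ ^ 2 :=
  sum_norm_sq_mulVec_of_conjTranspose_mul_eq_one hB.conjTranspose_mul_coordMatrix x

lemma outProb_one (hB : IsONB B) (i : Fin d) : outProb 1 (B i) = 1 := by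
  simp [outProb, hB i i]

lemma sum_outProb_eq_trace (hB : IsONB B) (M : Matrix (Fin d) (Fin d) ℂ) :
    ∑ i, outProb M (B i) = M.trace.re := by
  have h : coordMatrix B * M * (coordMatrix B)ᴴ = fun i j => star (B i) ⬝ᵥ (M *ᵥ B j) := by
    ext i j
    simp only [coordMatrix, Matrix.mul_apply, conjTranspose_apply, of_apply, star_star, dotProduct,
      mulVec, Pi.star_apply, mul_sum, sum_mul, mul_assoc]
    exact sum_comm
  have := congrArg (fun N => N.trace.re) h
  simp only [trace_mul_cycle, hB.conjTranspose_mul_coordMatrix, one_mul] at this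
  rw [this]
  exact (Complex.re_sum _ _).symm

end IsONB

end

namespace AreMUB

variable {d : ℕ} {B₁ B₂ : Fin d → Fin d → ℂ}

lemma norm_coordMatrix_mul_conjTranspose_apply (h : AreMUB B₁ B₂) (i j : Fin d) :
    ‖(coordMatrix B₁ * (coordMatrix B₂)ᴴ) i j‖ = √(1 / d) := by
  rw [← h i j, sqrt_sq (norm_nonneg _)]
  simp [coordMatrix, Matrix.mul_apply, dotProduct]

theorem sum_norm_sq_mul_log_le (hB₁ : IsONB B₁) (hB₂ : IsONB B₂) (h : AreMUB B₁ B₂)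
    (hd : 0 < d) (x : Fin d → ℂ) :
    (∑ k, ‖x k‖ ^ 2) * log d ≤ scaledEntropy (fun i => ‖star (B₁ i) ⬝ᵥ x‖ ^ 2) +
      scaledEntropy (fun j => ‖star (B₂ j) ⬝ᵥ x‖ ^ 2) := by
  set T := coordMatrix B₁ * (coordMatrix B₂)ᴴ
  have hT : Tᴴ * T = 1 := by
    rw [conjTranspose_mul, conjTranspose_conjTranspose, Matrix.mul_assoc,
      ← Matrix.mul_assoc (coordMatrix B₁)ᴴ, hB₁.conjTranspose_mul_coordMatrix, Matrix.one_mul,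
      hB₂.coordMatrix_mul_conjTranspose]
  have hTx : T *ᵥ (coordMatrix B₂ *ᵥ x) = coordMatrix B₁ *ᵥ x := by
    rw [mulVec_mulVec, Matrix.mul_assoc, hB₂.conjTranspose_mul_coordMatrix, Matrix.mul_one]
  have hc : 0 < √(1 / (d : ℝ)) := sqrt_pos.mpr (by positivity)
  have hlog : -(2 * log √(1 / (d : ℝ))) = log d := by
    rw [log_sqrt (by positivity), one_div, log_inv]
    ring
  have := maassen_uffink_scaledEntropy hT hc
    (fun i j => (h.norm_coordMatrix_mul_conjTranspose_apply i j).le) (coordMatrix B₂ *ᵥ x)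
  rw [hTx, hlog, coordMatrix_mulVec, coordMatrix_mulVec, hB₂.sum_norm_sq_dotProduct] at this
  linarith

theorem trace_mul_log_le_of_posSemidef (hB₁ : IsONB B₁) (hB₂ : IsONB B₂) (h : AreMUB B₁ B₂)
    (hd : 0 < d) {M : Matrix (Fin d) (Fin d) ℂ} (hM : M.PosSemidef) :
    M.trace.re * log d ≤ scaledEntropy (fun i => outProb M (B₁ i)) +
      scaledEntropy (fun j => outProb M (B₂ j)) := by
  obtain ⟨A, rfl⟩ : ∃ A, M = star A * A := by
    open scoped MatrixOrder in exact CStarAlgebra.nonneg_iff_eq_star_mul_self.mp hM.nonneg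
  set w : Fin d → Fin d → ℂ := fun k l => star (A k l)
  have hsplit : ∀ B : Fin d → Fin d → ℂ, (fun i => outProb (star A * A) (B i)) =
      ∑ k, fun i => ‖star (B i) ⬝ᵥ w k‖ ^ 2 := fun B => by
    ext i
    rw [star_eq_conjTranspose, outProb_conjTranspose_mul_self, Finset.sum_apply]
    refine sum_congr rfl fun k _ => ?_
    rw [show w k = star (fun l => A k l) from rfl, star_dotProduct_star, norm_star]
    rfl
  rw [← hB₁.sum_outProb_eq_trace, hsplit B₁, hsplit B₂]
  calc (∑ i, (∑ k, fun i => ‖star (B₁ i) ⬝ᵥ w k‖ ^ 2) i) * log d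
      = ∑ k, (∑ l, ‖w k l‖ ^ 2) * log d := by
        simp only [Finset.sum_apply, ← sum_mul]
        rw [sum_comm]
        simp only [hB₁.sum_norm_sq_dotProduct]
    _ ≤ ∑ k, (scaledEntropy (fun i => ‖star (B₁ i) ⬝ᵥ w k‖ ^ 2) +
          scaledEntropy (fun j => ‖star (B₂ j) ⬝ᵥ w k‖ ^ 2)) :=
        sum_le_sum fun k _ => h.sum_norm_sq_mul_log_le hB₁ hB₂ hd _
    _ ≤ _ := by
        rw [sum_add_distrib]
        exact add_le_add (sum_scaledEntropy_le fun _ _ => by positivity)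
          (sum_scaledEntropy_le fun _ _ => by positivity)

end AreMUB

section

lemma log_two_mul_shannonEntropy {ι : Type*} [Fintype ι] (q : ι → ℝ) :
    log 2 * shannonEntropy q = ∑ i, negMulLog (q i) := by
  rw [shannonEntropy, mul_neg, mul_sum, ← sum_neg_distrib]
  refine sum_congr rfl fun i _ => ?_
  rw [logb, negMulLog]
  field_simp

lemma log_two_mul_mutInfo {d : ℕ} {S : Type*} [Fintype S] {B : Fin d → Fin d → ℂ}
    {p : Fin d → ℝ} (hp : ∀ i, 0 ≤ p i) {E : S → Matrix (Fin d) (Fin d) ℂ}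
    (hE : ∀ s i, 0 ≤ outProb (E s) (B i)) :
    log 2 * mutInfo B p E =
      ∑ i, negMulLog (p i) - ∑ s, scaledEntropy fun i => p i * outProb (E s) (B i) := by
  rw [mutInfo, mul_sub, log_two_mul_shannonEntropy, mul_sum]
  congr 1
  refine sum_congr rfl fun s _ => ?_
  rw [mul_left_comm, log_two_mul_shannonEntropy,
    scaledEntropy_eq_sum_mul_sum_negMulLog_div fun i => mul_nonneg (hp i) (hE s i)]

variable {S ι : Type*} [Fintype S] [Fintype ι]

/-- `I(X;Y) = H(Y) - H(Y|X)` for the input distribution `p` and the channel `a s i = P(s | i)`. -/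
lemma sum_negMulLog_sub_sum_scaledEntropy {a : S → ι → ℝ} (ha1 : ∀ i, ∑ s, a s i = 1)
    (p : ι → ℝ) :
    ∑ i, negMulLog (p i) - ∑ s, scaledEntropy (fun i => p i * a s i) =
      ∑ s, negMulLog (∑ i, p i * a s i) - ∑ i, p i * ∑ s, negMulLog (a s i) := by
  simp only [scaledEntropy, negMulLog_mul, sum_sub_distrib, sum_add_distrib]
  rw [sum_comm (f := fun s i => a s i * negMulLog (p i)),
    sum_comm (f := fun s i => p i * negMulLog (a s i))]
  simp only [← sum_mul, ha1, one_mul, ← mul_sum]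
  ring

theorem sum_negMulLog_sub_sum_scaledEntropy_le {a : S → ι → ℝ} (ha : ∀ s i, 0 ≤ a s i)
    (ha1 : ∀ i, ∑ s, a s i = 1) {p : ι → ℝ} (hp : ∀ i, 0 ≤ p i) (hp1 : ∑ i, p i = 1) {q : ℝ}
    (hq : ∀ i, p i ≤ q) {r : S → ℝ} (hr : ∀ s, 0 ≤ r s) (hr1 : ∑ s, r s = 1)
    (har : ∀ s i, r s = 0 → a s i = 0) :
    ∑ i, negMulLog (p i) - ∑ s, scaledEntropy (fun i => p i * a s i) ≤
      q * ∑ i, ∑ s, a s i * (log (a s i) - log (r s)) := by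
  have hP1 : ∑ s, ∑ i, p i * a s i = 1 := by
    rw [sum_comm]; simp [← mul_sum, ha1, hp1]
  have hout : ∑ s, negMulLog (∑ i, p i * a s i) ≤ -∑ s, (∑ i, p i * a s i) * log (r s) := by
    rw [← scaledEntropy_of_sum_eq_one hP1]
    exact scaledEntropy_le_neg_sum_mul_log
      (fun s => sum_nonneg fun i _ => mul_nonneg (hp i) (ha s i))
      hr hr1 fun s i => by simp [har s _ i]
  have hkl : ∀ i, 0 ≤ ∑ s, a s i * (log (a s i) - log (r s)) := fun i => by
    have := scaledEntropy_le_neg_sum_mul_log (fun s => ha s i) hr hr1 fun s h => har s i h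
    rw [scaledEntropy_of_sum_eq_one (ha1 i)] at this
    simp only [mul_sub, sum_sub_distrib, negMulLog, neg_mul, sum_neg_distrib] at this ⊢
    linarith
  rw [sum_negMulLog_sub_sum_scaledEntropy ha1, mul_sum]
  calc _ ≤ -∑ s, (∑ i, p i * a s i) * log (r s) - ∑ i, p i * ∑ s, negMulLog (a s i) := by
        linarith
    _ = ∑ i, p i * ∑ s, a s i * (log (a s i) - log (r s)) := by
        simp only [sum_mul, mul_sum, negMulLog_eq_neg, mul_sub, mul_neg, sum_sub_distrib,
          sum_neg_distrib]
        rw [sum_comm (f := fun s i => p i * a s i * log (r s))]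
        ring_nf
    _ ≤ _ := sum_le_sum fun i _ => mul_le_mul_of_nonneg_right (hq i) (hkl i)

end

section

lemma pos_of_isGreatest_range_of_sum_eq_one {ι : Type*} [Fintype ι] {p : ι → ℝ}
    (hp1 : ∑ i, p i = 1) {q : ℝ} (hq : IsGreatest (Set.range p) q) : 0 < q := by
  by_contra! h
  have := sum_le_sum fun i (_ : i ∈ univ) => (hq.2 ⟨i, rfl⟩).trans h
  simp [hp1] at this
  linarith

variable {d : ℕ} {S : Type*} [Fintype S] {E : S → Matrix (Fin d) (Fin d) ℂ}

lemma IsPOVM.sum_trace_re (hE : IsPOVM E) : ∑ s, (E s).trace.re = d := by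
  rw [← Complex.re_sum, ← trace_sum, hE.2, trace_one]
  simp

/-- The sum on the right is `∑ i, D(s ↦ outProb (E s) (B i) ‖ s ↦ tr (E s) / d)`. -/
theorem IsONB.log_two_mul_mutInfo_le {B : Fin d → Fin d → ℂ} (hB : IsONB B) (hd : 0 < d)
    (hE : IsPOVM E) {p : Fin d → ℝ} (hp : ∀ i, 0 ≤ p i) (hp1 : ∑ i, p i = 1) {q : ℝ}
    (hq : ∀ i, p i ≤ q) :
    log 2 * mutInfo B p E ≤
      q * ∑ s, ((E s).trace.re * log d - scaledEntropy fun i => outProb (E s) (B i)) := by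
  have ha : ∀ s i, 0 ≤ outProb (E s) (B i) := fun s i => outProb_nonneg (hE.1 s) _
  have ha1 : ∀ i, ∑ s, outProb (E s) (B i) = 1 := fun i => by
    rw [← outProb_sum, hE.2, hB.outProb_one]
  have hd' : (d : ℝ) ≠ 0 := by exact_mod_cast hd.ne'
  have hr : ∀ s, 0 ≤ (E s).trace.re / d := fun s => by
    rw [← hB.sum_outProb_eq_trace]
    exact div_nonneg (sum_nonneg fun i _ => ha s i) (Nat.cast_nonneg d)
  have hr1 : ∑ s, (E s).trace.re / d = 1 := by
    rw [← sum_div, hE.sum_trace_re, div_self hd']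
  have har : ∀ s i, (E s).trace.re / d = 0 → outProb (E s) (B i) = 0 := fun s i h => by
    rw [div_eq_zero_iff, or_iff_left hd', ← hB.sum_outProb_eq_trace] at h
    exact (sum_eq_zero_iff_of_nonneg fun j _ => ha s j).mp h i (mem_univ i)
  rw [log_two_mul_mutInfo hp ha]
  refine (sum_negMulLog_sub_sum_scaledEntropy_le ha ha1 hp hp1 hq hr hr1 har).trans_eq ?_
  rw [sum_comm]
  congr 1
  refine sum_congr rfl fun s _ => ?_
  rw [← hB.sum_outProb_eq_trace]
  exact sum_mul_log_sub_log_div_eq (ha s) hd'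

end

theorem two_mub_weighted_info_bound_general
    {S : Type*} [Fintype S] (d : ℕ)
    (B₁ B₂ : Fin d → Fin d → ℂ)
    (hB₁ : IsONB B₁) (hB₂ : IsONB B₂) (hMUB : AreMUB B₁ B₂)
    (p₁ p₂ : Fin d → ℝ)
    (hp₁ : ∀ i, 0 ≤ p₁ i) (hp₁sum : ∑ i, p₁ i = 1)
    (hp₂ : ∀ i, 0 ≤ p₂ i) (hp₂sum : ∑ i, p₂ i = 1)
    (q₁ q₂ : ℝ)
    (hq₁ : IsGreatest (Set.range p₁) q₁) (hq₂ : IsGreatest (Set.range p₂) q₂)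
    (E : S → Matrix (Fin d) (Fin d) ℂ) (hE : IsPOVM E) :
    (1 / (d * q₁)) * mutInfo B₁ p₁ E + (1 / (d * q₂)) * mutInfo B₂ p₂ E
      ≤ Real.logb 2 d := by
  obtain ⟨i₀, -⟩ := hq₁.1
  have hd : (0 : ℝ) < d := by exact_mod_cast i₀.pos
  have hq₁pos := pos_of_isGreatest_range_of_sum_eq_one hp₁sum hq₁
  have hq₂pos := pos_of_isGreatest_range_of_sum_eq_one hp₂sum hq₂
  set X₁ := ∑ s, ((E s).trace.re * log d - scaledEntropy fun i => outProb (E s) (B₁ i))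
  set X₂ := ∑ s, ((E s).trace.re * log d - scaledEntropy fun i => outProb (E s) (B₂ i))
  have hI₁ : log 2 * mutInfo B₁ p₁ E ≤ q₁ * X₁ :=
    hB₁.log_two_mul_mutInfo_le i₀.pos hE hp₁ hp₁sum fun i => hq₁.2 ⟨i, rfl⟩
  have hI₂ : log 2 * mutInfo B₂ p₂ E ≤ q₂ * X₂ :=
    hB₂.log_two_mul_mutInfo_le i₀.pos hE hp₂ hp₂sum fun i => hq₂.2 ⟨i, rfl⟩
  have hX : X₁ + X₂ ≤ d * log d := by
    have := sum_le_sum fun s (_ : s ∈ univ) =>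
      hMUB.trace_mul_log_le_of_posSemidef hB₁ hB₂ i₀.pos (hE.1 s)
    rw [sum_add_distrib, ← sum_mul, hE.sum_trace_re] at this
    simp only [X₁, X₂, sum_sub_distrib, ← sum_mul, hE.sum_trace_re]
    linarith
  rw [Real.logb, le_div_iff₀ (Real.log_pos one_lt_two)]
  calc _ = log 2 * mutInfo B₁ p₁ E / (d * q₁) + log 2 * mutInfo B₂ p₂ E / (d * q₂) := by
        ring
    _ ≤ q₁ * X₁ / (d * q₁) + q₂ * X₂ / (d * q₂) := by gcongr
    _ = (X₁ + X₂) / d := by field_simp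
    _ ≤ log d := by rwa [div_le_iff₀ hd, mul_comm]

/-- Two MUBs, arbitrary priors: `(1/(d p₁⁽¹⁾)) I₁ + (1/(d p₁⁽²⁾)) I₂ ≤ log₂ d`,
where `p₁⁽ᵐ⁾` is the largest prior probability of the m-th basis. -/
theorem two_mub_weighted_info_bound
    {S : Type*} [Fintype S] (d : ℕ) (hd : 2 ≤ d)
    (B₁ B₂ : Fin d → Fin d → ℂ)
    (hB₁ : IsONB B₁) (hB₂ : IsONB B₂) (hMUB : AreMUB B₁ B₂)
    (p₁ p₂ : Fin d → ℝ)
    (hp₁ : ∀ i, 0 ≤ p₁ i) (hp₁sum : ∑ i, p₁ i = 1)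
    (hp₂ : ∀ i, 0 ≤ p₂ i) (hp₂sum : ∑ i, p₂ i = 1)
    (q₁ q₂ : ℝ)
    (hq₁ : IsGreatest (Set.range p₁) q₁) (hq₂ : IsGreatest (Set.range p₂) q₂)
    (E : S → Matrix (Fin d) (Fin d) ℂ) (hE : IsPOVM E) :
    (1 / (d * q₁)) * mutInfo B₁ p₁ E + (1 / (d * q₂)) * mutInfo B₂ p₂ E
      ≤ Real.logb 2 d :=
  two_mub_weighted_info_bound_general d B₁ B₂ hB₁ hB₂ hMUB p₁ p₂ hp₁ hp₁sum hp₂ hp₂sum q₁ q₂ hq₁ hq₂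
    E hE
end
end

section
/- For every integer d ≥ 2, setting M = d+1 and K = ⌊Md/(d+M−1)⌋ = ⌊(d+1)/2⌋, the quantity B(d) = M log₂(d/K) − (K+1)(M − K(d+M−1)/d) log₂(1 + 1/K) satisfies d − 1 ≤ B(d) < d; in particular B(d) is strictly less than d. -/
open scoped BigOperators ComplexOrder
open Matrix

noncomputable section

/-! In both parities `B(d) = d + 1 - c(n)` with `c(n) = (n + 1) log₂(1 + 1/n)`: for `d = 2m` one
has `log₂(d/K) = 1` and `M - K(d+M-1)/d = 1`, so `n = m`; for `d = 2m+1` the second term of `B`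
vanishes and `log₂(d/K) = 1 - log₂(1 + 1/d)`, so `n = d`. It remains to see `1 < c(n) ≤ 2`, i.e.
`2 < (1 + 1/n)^(n+1) ≤ 4`: the lower bound is Bernoulli's inequality, the upper one follows from
`(1 + 1/n)^n ≤ e` for `n ≥ 3` (equality holds at `n = 1`). -/

open Real

theorem two_lt_one_add_inv_pow_succ {n : ℕ} (hn : n ≠ 0) : 2 < (1 + (n : ℝ)⁻¹) ^ (n + 1) := by
  have hinv_pos : 0 < (n : ℝ)⁻¹ := inv_pos.2 (Nat.cast_pos.2 (Nat.pos_of_ne_zero hn))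
  calc (2 : ℝ) < 2 + (n : ℝ)⁻¹ := lt_add_of_pos_right _ hinv_pos
    _ = 1 + ((n + 1 : ℕ) : ℝ) * (n : ℝ)⁻¹ := by
      have : (n : ℝ) ≠ 0 := by exact_mod_cast hn
      push_cast; field_simp; ring
    _ ≤ _ := one_add_mul_le_pow (by linarith) _

theorem one_add_inv_pow_succ_le_four {n : ℕ} (hn : n ≠ 0) : (1 + (n : ℝ)⁻¹) ^ (n + 1) ≤ 4 := by
  rcases lt_or_ge n 3 with hsmall | hlarge
  · interval_cases n <;> norm_num
  · have hinv : (n : ℝ)⁻¹ ≤ 3⁻¹ := inv_anti₀ (by norm_num) (by exact_mod_cast hlarge)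
    calc (1 + (n : ℝ)⁻¹) ^ (n + 1) = (1 + (n : ℝ)⁻¹) ^ n * (1 + (n : ℝ)⁻¹) := pow_succ _ _
      _ ≤ exp 1 * (4 / 3) := by gcongr; exacts [one_add_inv_pow_le_exp, by linarith]
      _ ≤ 4 := by linarith [exp_one_lt_d9]

theorem one_lt_succ_mul_logb_one_add_inv {n : ℕ} (hn : n ≠ 0) :
    1 < ((n : ℝ) + 1) * logb 2 (1 + (n : ℝ)⁻¹) := by
  have := logb_lt_logb one_lt_two two_pos (two_lt_one_add_inv_pow_succ hn)
  rwa [logb_self_eq_one one_lt_two, logb_pow, Nat.cast_succ] at this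

theorem succ_mul_logb_one_add_inv_le_two {n : ℕ} (hn : n ≠ 0) :
    ((n : ℝ) + 1) * logb 2 (1 + (n : ℝ)⁻¹) ≤ 2 := by
  have := logb_le_logb_of_le one_lt_two (by positivity) (one_add_inv_pow_succ_le_four hn)
  rwa [logb_pow, Nat.cast_succ, show (4 : ℝ) = 2 ^ 2 by norm_num, logb_pow,
    logb_self_eq_one one_lt_two, mul_one, Nat.cast_ofNat] at this

def boundB (d M K : ℕ) : ℝ :=
  M * logb 2 ((d : ℝ) / K) - (K + 1) * (M - K * ((d : ℝ) + M - 1) / d) * logb 2 (1 + 1 / (K : ℝ))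

theorem boundB_two_mul {m : ℕ} (hm : m ≠ 0) :
    boundB (2 * m) (2 * m + 1) m = (2 * m : ℕ) + 1 - ((m : ℝ) + 1) * logb 2 (1 + (m : ℝ)⁻¹) := by
  have hm' : (m : ℝ) ≠ 0 := by exact_mod_cast hm
  have hratio : (2 * m : ℝ) / m = 2 := by field_simp
  have hslope : (m : ℝ) * (2 * m + (2 * m + 1) - 1) / (2 * m) = 2 * m := by field_simp; ring
  simp only [boundB]
  push_cast
  rw [hratio, hslope, logb_self_eq_one one_lt_two, one_div]
  ring

theorem boundB_two_mul_add_one (m : ℕ) :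
    boundB (2 * m + 1) (2 * m + 1 + 1) (m + 1) =
      (2 * m + 1 : ℕ) + 1 - ((2 * m + 1 : ℕ) + 1) * logb 2 (1 + ((2 * m + 1 : ℕ) : ℝ)⁻¹) := by
  have hratio : (2 * m + 1 : ℝ) / (m + 1) = 2 / (1 + (2 * (m : ℝ) + 1)⁻¹) := by field_simp; ring
  have hslope : ((m : ℝ) + 1) * (2 * m + 1 + (2 * m + 1 + 1) - 1) / (2 * m + 1) = 2 * m + 1 + 1 := by
    field_simp; ring
  simp only [boundB]
  push_cast
  rw [hratio, hslope, logb_div two_ne_zero (by positivity), logb_self_eq_one one_lt_two]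
  ring

theorem exists_boundB_eq {d : ℕ} (hd : d ≠ 0) : ∃ n : ℕ, n ≠ 0 ∧
    boundB d (d + 1) ((d + 1) / 2) = d + 1 - ((n : ℝ) + 1) * logb 2 (1 + (n : ℝ)⁻¹) := by
  rcases Nat.even_or_odd' d with ⟨m, rfl | rfl⟩
  · refine ⟨m, by omega, ?_⟩
    rw [show (2 * m + 1) / 2 = m by omega, boundB_two_mul (by omega)]
  · refine ⟨2 * m + 1, by omega, ?_⟩
    rw [show (2 * m + 1 + 1) / 2 = m + 1 by omega, boundB_two_mul_add_one]

theorem succ_mul_div_two_mul_sub_one {d : ℕ} (hd : d ≠ 0) :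
    (d + 1) * d / (d + (d + 1) - 1) = (d + 1) / 2 := by
  rw [show d + (d + 1) - 1 = 2 * d by omega, Nat.mul_div_mul_right _ _ (Nat.pos_of_ne_zero hd)]

/-- For `M = d+1` and `K = ⌊Md/(d+M−1)⌋ = ⌊(d+1)/2⌋`, the bound
`B(d) = M log₂(d/K) − (K+1)(M − K(d+M−1)/d) log₂(1+1/K)` satisfies `d−1 ≤ B(d) < d`. -/
theorem dplus1_bound_between (d M K : ℕ) (hd : 2 ≤ d) (hM : M = d + 1)
    (hK : K = M * d / (d + M - 1)) :
    K = (d + 1) / 2 ∧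
    (d : ℝ) - 1 ≤ (M : ℝ) * Real.logb 2 ((d : ℝ) / (K : ℝ))
        - ((K : ℝ) + 1) * ((M : ℝ) - (K : ℝ) * ((d : ℝ) + (M : ℝ) - 1) / (d : ℝ))
          * Real.logb 2 (1 + 1 / (K : ℝ)) ∧
    (M : ℝ) * Real.logb 2 ((d : ℝ) / (K : ℝ))
        - ((K : ℝ) + 1) * ((M : ℝ) - (K : ℝ) * ((d : ℝ) + (M : ℝ) - 1) / (d : ℝ))
          * Real.logb 2 (1 + 1 / (K : ℝ)) < (d : ℝ) := by
  have hd0 : d ≠ 0 := by omega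
  subst hM
  obtain rfl : K = (d + 1) / 2 := hK.trans (succ_mul_div_two_mul_sub_one hd0)
  obtain ⟨n, hn, hB⟩ := exists_boundB_eq hd0
  change _ ∧ _ ≤ boundB d (d + 1) ((d + 1) / 2) ∧ boundB d (d + 1) ((d + 1) / 2) < _
  have hlower := one_lt_succ_mul_logb_one_add_inv hn
  have hupper := succ_mul_logb_one_add_inv_le_two hn
  exact ⟨rfl, by linarith, by linarith⟩
end
end
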